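/- arXiv:2409.18116 — 3 statements merged into one kernel-verified Lean document; each statement's English description precedes it below -/
import Mathlib

section
/- For each prime p let m_p(z) = ⌊log z / log p⌋ be the largest integer with p^{m_p(z)} ≤ z, and define ε̃(z) = ∑_{p ≤ z} p^{−1−m_p(z)}. Then ε̃(z) ≪ (log z)/√z; in particular ε̃(z) → 0 as z → ∞. -/
open Finset Filter

lemma my_key (z : ℝ) (hz : 2 ≤ z) :
    (∑ p ∈ (Finset.range (⌊z⌋₊ + 1)).filter Nat.Prime,
        ((p : ℝ) ^ (1 + ⌊Real.log z / Real.log p⌋₊))⁻¹)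
      ≤ 3 * Real.log z / Real.sqrt z := by
  have hz0 : (0 : ℝ) < z := lt_of_lt_of_le two_pos hz
  have hz1 : (1 : ℝ) ≤ z := le_trans one_le_two hz
  have hs0 : 0 < Real.sqrt z := Real.sqrt_pos.2 hz0
  have hlog2 : (1 : ℝ) / 2 ≤ Real.log z := by
    have : (0.6931471803 : ℝ) < Real.log 2 := Real.log_two_gt_d9
    nlinarith [Real.log_le_log (by norm_num) hz]
  -- step 1: termwise bound
  have step1 : ∀ p ∈ (Finset.range (⌊z⌋₊ + 1)).filter Nat.Prime,
      ((p : ℝ) ^ (1 + ⌊Real.log z / Real.log p⌋₊))⁻¹ ≤ (Real.sqrt z)⁻¹ * (p : ℝ)⁻¹ := by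
    intro p hp
    rw [Finset.mem_filter, Finset.mem_range] at hp
    obtain ⟨hpr, hprime⟩ := hp
    have hp2 : 2 ≤ p := hprime.two_le
    have hpz : (p : ℝ) ≤ z := by
      have : p ≤ ⌊z⌋₊ := Nat.lt_succ_iff.mp hpr
      exact le_trans (by exact_mod_cast this) (Nat.floor_le hz0.le)
    have hp1 : (1 : ℝ) < p := by exact_mod_cast hprime.one_lt
    have hlp : 0 < Real.log p := Real.log_pos hp1
    set m := ⌊Real.log z / Real.log p⌋₊ with hm
    have hm1 : 1 ≤ m := by
      apply Nat.le_floor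
      rw [Nat.cast_one, le_div_iff₀ hlp, one_mul]
      exact Real.log_le_log (by positivity) hpz
    have hkey : z < (p : ℝ) ^ (1 + m) := by
      have h1 : Real.log z / Real.log p < m + 1 := Nat.lt_floor_add_one _
      have h2 : Real.log z < (1 + m : ℕ) * Real.log p := by
        rw [div_lt_iff₀ hlp] at h1
        push_cast
        linarith
      have h3 : Real.log z < Real.log ((p : ℝ) ^ (1 + m)) := by
        rwa [Real.log_pow]
      have hppos : (0 : ℝ) < (p : ℝ) ^ (1 + m) := by positivity
      exact (Real.log_lt_log_iff hz0 hppos).mp h3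
    have hpsq : (p : ℝ) ^ 2 ≤ (p : ℝ) ^ (1 + m) :=
      pow_le_pow_right₀ (le_of_lt hp1) (by omega)
    have hsq : Real.sqrt z * p ≤ (p : ℝ) ^ (1 + m) := by
      have h1 : z * (p : ℝ) ^ 2 ≤ (p : ℝ) ^ (1 + m) * (p : ℝ) ^ (1 + m) :=
        mul_le_mul hkey.le hpsq (by positivity) (by positivity)
      calc Real.sqrt z * p = Real.sqrt (z * (p : ℝ) ^ 2) := by
            rw [Real.sqrt_mul hz0.le, Real.sqrt_sq (by positivity)]
        _ ≤ Real.sqrt ((p : ℝ) ^ (1 + m) * (p : ℝ) ^ (1 + m)) := Real.sqrt_le_sqrt h1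
        _ = (p : ℝ) ^ (1 + m) := Real.sqrt_mul_self (by positivity)
    rw [← mul_inv]
    exact inv_anti₀ (by positivity) hsq
  -- step 2
  have step2 : (∑ p ∈ (Finset.range (⌊z⌋₊ + 1)).filter Nat.Prime, (Real.sqrt z)⁻¹ * (p : ℝ)⁻¹)
      ≤ (Real.sqrt z)⁻¹ * (1 + Real.log z) := by
    rw [← Finset.mul_sum]
    apply mul_le_mul_of_nonneg_left _ (by positivity)
    have hsub : (Finset.range (⌊z⌋₊ + 1)).filter Nat.Prime ⊆ Finset.Icc 1 ⌊z⌋₊ := by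
      intro p hp
      rw [Finset.mem_filter, Finset.mem_range] at hp
      rw [Finset.mem_Icc]
      exact ⟨hp.2.one_lt.le, Nat.lt_succ_iff.mp hp.1⟩
    calc (∑ p ∈ (Finset.range (⌊z⌋₊ + 1)).filter Nat.Prime, ((p : ℝ))⁻¹)
        ≤ ∑ d ∈ Finset.Icc 1 ⌊z⌋₊, ((d : ℝ))⁻¹ :=
          Finset.sum_le_sum_of_subset_of_nonneg hsub (fun i _ _ => by positivity)
      _ = (harmonic ⌊z⌋₊ : ℝ) := by
          rw [harmonic_eq_sum_Icc]
          push_cast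
          rfl
      _ ≤ 1 + Real.log ⌊z⌋₊ := harmonic_le_one_add_log _
      _ ≤ 1 + Real.log z := by
          gcongr
          · have : 1 ≤ ⌊z⌋₊ := Nat.one_le_floor_iff _ |>.mpr hz1
            exact_mod_cast this
          · exact Nat.floor_le hz0.le
  calc (∑ p ∈ (Finset.range (⌊z⌋₊ + 1)).filter Nat.Prime,
          ((p : ℝ) ^ (1 + ⌊Real.log z / Real.log p⌋₊))⁻¹)
      ≤ ∑ p ∈ (Finset.range (⌊z⌋₊ + 1)).filter Nat.Prime, (Real.sqrt z)⁻¹ * (p : ℝ)⁻¹ :=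
        Finset.sum_le_sum step1
    _ ≤ (Real.sqrt z)⁻¹ * (1 + Real.log z) := step2
    _ ≤ 3 * Real.log z / Real.sqrt z := by
        rw [div_eq_mul_inv, mul_comm ((Real.sqrt z)⁻¹)]
        exact mul_le_mul_of_nonneg_right (by linarith) (by positivity)

/-- With `m_p(z) = ⌊log z / log p⌋` and `ε̃(z) = ∑_{p ≤ z} p^{-1-m_p(z)}`,
one has `ε̃(z) ≪ (log z)/√z`; in particular `ε̃(z) → 0` as `z → ∞`. -/
theorem stmt_7 :
    (∃ C : ℝ, 0 < C ∧ ∀ z : ℝ, 2 ≤ z →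
      (∑ p ∈ (Finset.range (⌊z⌋₊ + 1)).filter Nat.Prime,
          ((p : ℝ) ^ (1 + ⌊Real.log z / Real.log p⌋₊))⁻¹)
        ≤ C * Real.log z / Real.sqrt z) ∧
    Tendsto (fun z : ℝ =>
        ∑ p ∈ (Finset.range (⌊z⌋₊ + 1)).filter Nat.Prime,
          ((p : ℝ) ^ (1 + ⌊Real.log z / Real.log p⌋₊))⁻¹)
      atTop (nhds 0) := by
  constructor
  · exact ⟨3, by norm_num, fun z hz => my_key z hz⟩
  · have h0 : Tendsto (fun z : ℝ => 3 * Real.log z / Real.sqrt z) atTop (nhds 0) := by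
      have h1 : Tendsto (fun z : ℝ => Real.log z / z ^ (1/2 : ℝ)) atTop (nhds 0) :=
        (isLittleO_log_rpow_atTop (by norm_num)).tendsto_div_nhds_zero
      have h2 : Tendsto (fun z : ℝ => Real.log z / Real.sqrt z) atTop (nhds 0) := by
        apply h1.congr'
        filter_upwards [eventually_ge_atTop (0 : ℝ)] with z hz
        rw [Real.sqrt_eq_rpow]
      have := h2.const_mul (3 : ℝ)
      simpa [mul_div_assoc] using this
    apply squeeze_zero_norm' _ h0
    filter_upwards [eventually_ge_atTop (2 : ℝ)] with z hz
    rw [Real.norm_eq_abs, abs_of_nonneg (Finset.sum_nonneg fun i _ => by positivity)]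
    exact my_key z hz
end

section
/- Fix m ≥ 2 and a modulus q. For all x ≥ 1 and r ∈ ℤ/qℤ, the number of m-full integers k ≤ x with k ≡ r (mod q) equals ρ(r,q)·x^{1/m} + o_q(x^{1/m}), where ρ(r,q) = q^{−1}·∑_{k₂,…,k_m ∈ ℕ} μ(k₂⋯k_m)²·k₂^{−1−1/m}·k₃^{−1−2/m}⋯k_m^{−(2−1/m)}·#{y ∈ ℤ/qℤ : y^m·k₂^{m+1}⋯k_m^{2m−1} = r}. -/
open Finset Filter ArithmeticFunction

namespace Stmt12

/-- `Kf m c = ∏ i, c i ^ (m + i + 1)`. -/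
def Kf (m : ℕ) (c : Fin (m - 1) → ℕ) : ℕ := ∏ i, c i ^ (m + (i : ℕ) + 1)

lemma Kf_ne_zero {m : ℕ} {c : Fin (m - 1) → ℕ} (hc : ∀ i, c i ≠ 0) : Kf m c ≠ 0 := by
  simp only [Kf, Finset.prod_ne_zero_iff]
  exact fun i _ => pow_ne_zero _ (hc i)

lemma c_ne_zero {m : ℕ} {c : Fin (m - 1) → ℕ} (hsc : Squarefree (∏ i, c i)) (i : Fin (m - 1)) :
    c i ≠ 0 :=
  Finset.prod_ne_zero_iff.mp hsc.ne_zero i (Finset.mem_univ i)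

/-- Master local (at a prime / any natural `p`) computation for the factorization of
`k ^ m * Kf m c` when `∏ c` is squarefree. -/
lemma master {m : ℕ} (hm1 : 1 ≤ m) (c : Fin (m - 1) → ℕ) (k : ℕ)
    (hsc : Squarefree (∏ i, c i)) (hk : k ≠ 0) (p : ℕ) :
    (∀ i, (c i).factorization p
        = if (k ^ m * Kf m c).factorization p % m = (i : ℕ) + 1 then 1 else 0)
    ∧ k.factorization p = (k ^ m * Kf m c).factorization p / m
        - (if (k ^ m * Kf m c).factorization p % m = 0 then 0 else 1)
    ∧ ((k ^ m * Kf m c).factorization p = 0 ∨ m ≤ (k ^ m * Kf m c).factorization p) := by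
  have hc : ∀ i, c i ≠ 0 := c_ne_zero hsc
  have hK : Kf m c ≠ 0 := Kf_ne_zero hc
  set a : Fin (m - 1) → ℕ := fun i => (c i).factorization p with ha_def
  have hsum : ∑ i : Fin (m - 1), a i ≤ 1 := by
    have h1 : (∏ i, c i).factorization p = ∑ i : Fin (m - 1), a i := by
      rw [Nat.factorization_prod (fun i _ => hc i)]
      simp [ha_def]
    rw [← h1]
    exact (Nat.squarefree_iff_factorization_le_one hsc.ne_zero).mp hsc p
  have hE : (Kf m c).factorization p = ∑ i : Fin (m - 1), (m + (i : ℕ) + 1) * a i := by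
    rw [Kf, Nat.factorization_prod (fun i _ => pow_ne_zero _ (hc i))]
    simp [Nat.factorization_pow, ha_def, mul_comm]
  have ht : (k ^ m * Kf m c).factorization p
      = m * k.factorization p + ∑ i : Fin (m - 1), (m + (i : ℕ) + 1) * a i := by
    rw [Nat.factorization_mul (pow_ne_zero _ hk) hK, Nat.factorization_pow, ← hE]
    simp [mul_comm]
  obtain hs | hs : (∑ i : Fin (m - 1), a i) = 0 ∨ (∑ i : Fin (m - 1), a i) = 1 := by omega
  · -- all `a i = 0`
    have hz : ∀ i, a i = 0 := by
      intro i
      have := Finset.sum_eq_zero_iff.mp hs i (Finset.mem_univ i)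
      exact this
    have hE0 : ∑ i : Fin (m - 1), (m + (i : ℕ) + 1) * a i = 0 :=
      Finset.sum_eq_zero fun i _ => by rw [hz i, mul_zero]
    rw [ht, hE0, add_zero]
    have hmod : m * k.factorization p % m = 0 := Nat.mul_mod_right _ _
    refine ⟨fun i => ?_, ?_, ?_⟩
    · rw [hmod, if_neg (by omega)]; exact hz i
    · rw [hmod, if_pos rfl, Nat.mul_div_cancel_left _ hm1, Nat.sub_zero]
    · rcases Nat.eq_zero_or_pos (k.factorization p) with h | h
      · left; rw [h, mul_zero]
      · right; calc m = m * 1 := (mul_one m).symm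
          _ ≤ m * k.factorization p := Nat.mul_le_mul_left m h
  · -- exactly one `a i = 1`
    obtain ⟨i₀, hi₀⟩ : ∃ i₀, a i₀ ≠ 0 := by
      by_contra h
      push_neg at h
      rw [Finset.sum_eq_zero (fun i _ => h i)] at hs
      exact absurd hs (by omega)
    have hai₀ : a i₀ = 1 := by
      have hle : a i₀ ≤ ∑ i : Fin (m - 1), a i :=
        Finset.single_le_sum (fun i _ => Nat.zero_le _) (Finset.mem_univ i₀)
      omega
    have hothers : ∀ j, j ≠ i₀ → a j = 0 := by
      intro j hj
      have h2 : a i₀ + ∑ i ∈ Finset.univ.erase i₀, a i = 1 := by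
        rw [Finset.add_sum_erase _ _ (Finset.mem_univ i₀), hs]
      have h3 : ∑ i ∈ Finset.univ.erase i₀, a i = 0 := by omega
      exact Finset.sum_eq_zero_iff.mp h3 j (Finset.mem_erase.mpr ⟨hj, Finset.mem_univ j⟩)
    have hEsum : ∑ i : Fin (m - 1), (m + (i : ℕ) + 1) * a i = m + (i₀ : ℕ) + 1 := by
      rw [Finset.sum_eq_single i₀ (fun j _ hj => by rw [hothers j hj, mul_zero])
        (fun h => absurd (Finset.mem_univ i₀) h), hai₀, mul_one]
    have hi₀lt : (i₀ : ℕ) + 1 < m := by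
      have := i₀.isLt
      omega
    have ht' : (k ^ m * Kf m c).factorization p = m * (k.factorization p + 1) + ((i₀ : ℕ) + 1) := by
      rw [ht, hEsum]; ring
    have hmod : (k ^ m * Kf m c).factorization p % m = (i₀ : ℕ) + 1 := by
      rw [ht', Nat.mul_add_mod, Nat.mod_eq_of_lt hi₀lt]
    have hdiv : (k ^ m * Kf m c).factorization p / m = k.factorization p + 1 := by
      rw [ht', Nat.mul_add_div (by omega), Nat.div_eq_of_lt hi₀lt, add_zero]
    refine ⟨fun i => ?_, ?_, ?_⟩
    · rw [hmod]
      by_cases hii : i = i₀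
      · rw [if_pos (by rw [hii]), hii]; exact hai₀
      · rw [if_neg (fun h => hii (Fin.ext (by omega)))]; exact hothers i hii
    · rw [hmod, hdiv, if_neg (by omega)]; omega
    · right; rw [ht']; omega
lemma inj_lemma {m : ℕ} (hm1 : 1 ≤ m) {c c' : Fin (m - 1) → ℕ} {k k' : ℕ}
    (hsc : Squarefree (∏ i, c i)) (hsc' : Squarefree (∏ i, c' i))
    (hk : k ≠ 0) (hk' : k' ≠ 0)
    (heq : k ^ m * Kf m c = k' ^ m * Kf m c') : k = k' ∧ c = c' := by
  constructor
  · refine Nat.factorization_inj hk hk' ?_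
    ext p
    rw [(master hm1 c k hsc hk p).2.1, (master hm1 c' k' hsc' hk' p).2.1, heq]
  · funext i
    refine Nat.factorization_inj (c_ne_zero hsc i) (c_ne_zero hsc' i) ?_
    ext p
    rw [(master hm1 c k hsc hk p).1 i, (master hm1 c' k' hsc' hk' p).1 i, heq]

lemma full_of_rep {m : ℕ} (hm1 : 1 ≤ m) {c : Fin (m - 1) → ℕ} {k : ℕ}
    (hsc : Squarefree (∏ i, c i)) (hk : k ≠ 0) :
    ∀ p : ℕ, p.Prime → p ∣ k ^ m * Kf m c → p ^ m ∣ k ^ m * Kf m c := by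
  intro p hp hdvd
  have hn0 : k ^ m * Kf m c ≠ 0 :=
    mul_ne_zero (pow_ne_zero _ hk) (Kf_ne_zero (c_ne_zero hsc))
  have h1 : 1 ≤ (k ^ m * Kf m c).factorization p := by
    rw [← hp.pow_dvd_iff_le_factorization hn0, pow_one]; exact hdvd
  rcases (master hm1 c k hsc hk p).2.2 with h | h
  · omega
  · exact (hp.pow_dvd_iff_le_factorization hn0).mpr h

lemma fact_prod_pow {S : Finset ℕ} (hS : ∀ p ∈ S, p.Prime) (g : ℕ → ℕ) (p : ℕ) :
    (∏ q ∈ S, q ^ g q).factorization p = if p ∈ S then g p else 0 := by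
  rw [Nat.factorization_prod (fun q hq => pow_ne_zero _ (hS q hq).pos.ne')]
  rw [Finset.sum_apply']
  rw [Finset.sum_congr rfl (fun q hq => by
    rw [(hS q hq).factorization_pow, Finsupp.single_apply])]
  simp [Finset.sum_ite_eq]

lemma surj_lemma {m : ℕ} (hm2 : 2 ≤ m) {n : ℕ} (hn : n ≠ 0)
    (hfull : ∀ p : ℕ, p.Prime → p ∣ n → p ^ m ∣ n) :
    ∃ (c : Fin (m - 1) → ℕ) (k : ℕ), Squarefree (∏ i, c i) ∧ k ≠ 0 ∧
      n = k ^ m * Kf m c := by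
  have hm1 : 1 ≤ m := by omega
  classical
  set c : Fin (m - 1) → ℕ := fun i =>
    ∏ p ∈ n.primeFactors.filter (fun p => n.factorization p % m = (i : ℕ) + 1), p with hc_def
  set k : ℕ := ∏ p ∈ n.primeFactors,
    p ^ (n.factorization p / m - if n.factorization p % m = 0 then 0 else 1) with hk_def
  have hprimes : ∀ p ∈ n.primeFactors, Nat.Prime p := fun p hp => Nat.prime_of_mem_primeFactors hp
  have hfc : ∀ (i : Fin (m - 1)) (p : ℕ), (c i).factorization p
      = if p ∈ n.primeFactors ∧ n.factorization p % m = (i : ℕ) + 1 then 1 else 0 := by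
    intro i p
    have : c i = ∏ q ∈ n.primeFactors.filter (fun q => n.factorization q % m = (i : ℕ) + 1),
        q ^ (1 : ℕ) := by simp [hc_def]
    rw [this, fact_prod_pow (fun q hq => hprimes q (Finset.mem_filter.mp hq).1)]
    simp [Finset.mem_filter]
  have hfk : ∀ p : ℕ, k.factorization p = if p ∈ n.primeFactors
      then n.factorization p / m - (if n.factorization p % m = 0 then 0 else 1) else 0 :=
    fun p => fact_prod_pow hprimes _ p
  have hcne : ∀ i, c i ≠ 0 := fun i =>
    Finset.prod_ne_zero_iff.mpr fun q hq => (hprimes q (Finset.mem_filter.mp hq).1).pos.ne'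
  have hkne : k ≠ 0 :=
    Finset.prod_ne_zero_iff.mpr fun q hq => pow_ne_zero _ (hprimes q hq).pos.ne'
  have hfullfact : ∀ p ∈ n.primeFactors, m ≤ n.factorization p := by
    intro p hp
    have hprime := hprimes p hp
    have hdvd : p ∣ n := Nat.dvd_of_mem_primeFactors hp
    exact (hprime.pow_dvd_iff_le_factorization hn).mp (hfull p hprime hdvd)
  -- squarefreeness of the product
  have hsc : Squarefree (∏ i, c i) := by
    have hprod_ne : (∏ i, c i) ≠ 0 := Finset.prod_ne_zero_iff.mpr fun i _ => hcne i
    rw [Nat.squarefree_iff_factorization_le_one hprod_ne]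
    intro p
    rw [Nat.factorization_prod (fun i _ => hcne i), Finset.sum_apply']
    rw [Finset.sum_congr rfl (fun i _ => hfc i p)]
    rw [Finset.sum_boole]
    norm_cast
    rw [Finset.card_le_one]
    intro a ha b hb
    simp only [Finset.mem_filter, Finset.mem_univ, true_and] at ha hb
    exact Fin.ext (by omega)
  refine ⟨c, k, hsc, hkne, ?_⟩
  -- factorization equality
  have hrhs_ne : k ^ m * Kf m c ≠ 0 :=
    mul_ne_zero (pow_ne_zero _ hkne) (Kf_ne_zero hcne)
  refine Nat.factorization_inj hn hrhs_ne ?_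
  ext p
  have hRHS : (k ^ m * Kf m c).factorization p
      = m * k.factorization p + ∑ i : Fin (m - 1), (m + (i : ℕ) + 1) * (c i).factorization p := by
    rw [Nat.factorization_mul (pow_ne_zero _ hkne) (Kf_ne_zero hcne), Nat.factorization_pow]
    rw [Kf, Nat.factorization_prod (fun i _ => pow_ne_zero _ (hcne i))]
    simp [Finset.sum_apply', Nat.factorization_pow, mul_comm]
  rw [hRHS]
  by_cases hp : p ∈ n.primeFactors
  · have ht : m ≤ n.factorization p := hfullfact p hp
    by_cases hs : n.factorization p % m = 0
    · have hsum0 : ∑ i : Fin (m - 1), (m + (i : ℕ) + 1) * (c i).factorization p = 0 := by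
        refine Finset.sum_eq_zero fun i _ => ?_
        rw [hfc i p, if_neg (fun h => by obtain ⟨-, h2⟩ := h; omega), mul_zero]
      rw [hsum0, add_zero, hfk p, if_pos hp, if_pos hs, Nat.sub_zero]
      have hdm := Nat.div_add_mod (n.factorization p) m
      omega
    · obtain ⟨s, hs1, hslt, hsmod⟩ : ∃ s, 1 ≤ s ∧ s < m ∧ n.factorization p % m = s :=
        ⟨n.factorization p % m, Nat.pos_of_ne_zero hs, Nat.mod_lt _ (by omega), rfl⟩
      have hi₀lt : s - 1 < m - 1 := by omega
      set i₀ : Fin (m - 1) := ⟨s - 1, hi₀lt⟩ with hi₀_def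
      have hi₀val : (i₀ : ℕ) = s - 1 := rfl
      have hsum : ∑ i : Fin (m - 1), (m + (i : ℕ) + 1) * (c i).factorization p
          = m + (s - 1) + 1 := by
        rw [Finset.sum_eq_single i₀ (fun j _ hj => ?_) (fun h => absurd (Finset.mem_univ i₀) h)]
        · rw [hfc i₀ p, if_pos ⟨hp, by rw [hi₀val]; omega⟩, mul_one, hi₀val]
        · rw [hfc j p, if_neg, mul_zero]
          rintro ⟨-, hcond⟩
          exact hj (Fin.ext (by rw [hi₀val]; omega))
      rw [hsum, hfk p, if_pos hp, if_neg hs]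
      have hdge : 1 ≤ n.factorization p / m := (Nat.one_le_div_iff (by omega)).mpr ht
      obtain ⟨d, hd⟩ : ∃ d, n.factorization p / m = d + 1 := ⟨n.factorization p / m - 1, by omega⟩
      have hdm := Nat.div_add_mod (n.factorization p) m
      rw [hd] at hdm ⊢
      have hexp : m * (d + 1) = m * d + m := by ring
      have hstep : m * (d + 1 - 1) = m * d := by norm_num
      rw [hstep]
      omega
  · -- p not a prime factor of n
    have hf0 : n.factorization p = 0 := by
      rw [Nat.factorization_eq_zero_iff]
      by_cases hpp : p.Prime
      · right; left; intro hdvd; exact hp (Nat.mem_primeFactors.mpr ⟨hpp, hdvd, hn⟩)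
      · left; exact hpp
    rw [hf0, hfk p, if_neg hp, mul_zero, zero_add]
    refine (Finset.sum_eq_zero fun i _ => ?_).symm
    rw [hfc i p, if_neg (fun h => hp h.1), mul_zero]
lemma card_residue {q a : ℕ} (hq : 0 < q) (ha1 : 1 ≤ a) (haq : a ≤ q) (N : ℕ) :
    ((Finset.Icc 1 N).filter (fun k => k % q = a % q)).card = (N + q - a) / q := by
  induction N with
  | zero =>
    rw [show Finset.Icc 1 0 = ∅ from rfl, Finset.filter_empty, Finset.card_empty]
    rw [Nat.div_eq_of_lt (by omega)]
  | succ n ih =>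
    have hins : Finset.Icc 1 (n + 1) = insert (n + 1) (Finset.Icc 1 n) := by
      ext k; simp only [Finset.mem_Icc, Finset.mem_insert]; omega
    have hkey : ((n + 1) % q = a % q) ↔ q ∣ (n + q - a) + 1 := by
      constructor
      · intro h
        have h1 : a ≡ n + 1 [MOD q] := h.symm
        have h2 : (n : ℕ) + 1 ≡ n + 1 + q [MOD q] :=
          (Nat.modEq_iff_dvd' (by omega)).mpr ⟨1, by omega⟩
        have h3 := (Nat.modEq_iff_dvd' (by omega : a ≤ n + 1 + q)).mp (h1.trans h2)
        have he : n + 1 + q - a = (n + q - a) + 1 := by omega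
        rwa [he] at h3
      · intro h
        have he : n + 1 + q - a = (n + q - a) + 1 := by omega
        have h3 : a ≡ n + 1 + q [MOD q] := (Nat.modEq_iff_dvd' (by omega)).mpr (he ▸ h)
        have h2 : (n : ℕ) + 1 + q ≡ n + 1 [MOD q] :=
          ((Nat.modEq_iff_dvd' (by omega)).mpr ⟨1, by omega⟩).symm
        exact (h3.trans h2).symm
    rw [hins, Finset.filter_insert]
    have hnm : (n + 1) ∉ Finset.Icc 1 n := by simp
    have harith : n + 1 + q - a = (n + q - a) + 1 := by omega
    by_cases h : (n + 1) % q = a % q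
    · rw [if_pos h, Finset.card_insert_of_notMem (fun hmem => hnm (Finset.mem_filter.mp hmem).1),
        ih, harith, Nat.succ_div, if_pos (hkey.mp h)]
    · rw [if_neg h, ih, harith, Nat.succ_div, if_neg (fun hd => h (hkey.mpr hd)), add_zero]

lemma nat_div_bounds {d q : ℕ} (hq : 0 < q) :
    (d : ℝ) / q - 1 < ((d / q : ℕ) : ℝ) ∧ ((d / q : ℕ) : ℝ) ≤ (d : ℝ) / q := by
  have hq' : (0 : ℝ) < q := by exact_mod_cast hq
  have h1 := Nat.div_add_mod d q
  have h2 : d % q < q := Nat.mod_lt _ hq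
  have h1' : (q : ℝ) * ((d / q : ℕ) : ℝ) + ((d % q : ℕ) : ℝ) = (d : ℝ) := by exact_mod_cast h1
  have h2' : ((d % q : ℕ) : ℝ) < (q : ℝ) := by exact_mod_cast h2
  have h0' : (0 : ℝ) ≤ ((d % q : ℕ) : ℝ) := by positivity
  constructor
  · rw [div_sub_one hq'.ne', div_lt_iff₀ hq']
    nlinarith
  · rw [le_div_iff₀ hq']
    nlinarith

/-- Counting integers in `[1, N]` in a fixed residue class mod `q`. -/
lemma count_class {q : ℕ} (hq : 0 < q) (N : ℕ) (y : ZMod q) :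
    |((((Finset.Icc 1 N).filter (fun k : ℕ => ((k : ZMod q) = y))).card : ℝ) - (N : ℝ) / q)| ≤ 1 := by
  haveI : NeZero q := ⟨hq.ne'⟩
  set a : ℕ := if y.val = 0 then q else y.val with ha_def
  have ha1 : 1 ≤ a := by
    rw [ha_def]; split
    · exact hq
    · omega
  have haq : a ≤ q := by
    have := ZMod.val_lt y
    rw [ha_def]; split <;> omega
  have hcast : ((a : ℕ) : ZMod q) = y := by
    rw [ha_def]; split
    · next h0 =>
      have : y = 0 := (ZMod.val_eq_zero y).mp h0
      simp [this]
    · exact ZMod.natCast_rightInverse y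
  have hpred : ∀ k : ℕ, ((k : ZMod q) = y) ↔ (k % q = a % q) := by
    intro k
    rw [← hcast, ZMod.natCast_eq_natCast_iff]
    rfl
  have hfilter : (Finset.Icc 1 N).filter (fun k : ℕ => ((k : ZMod q) = y))
      = (Finset.Icc 1 N).filter (fun k => k % q = a % q) := by
    apply Finset.filter_congr
    intro k _
    simp only [hpred k]
  rw [hfilter, card_residue hq ha1 haq N]
  set d : ℕ := N + q - a with hd_def
  have hdc : (d : ℝ) = (N : ℝ) + q - a := by
    rw [hd_def]; push_cast [show a ≤ N + q by omega]; ring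
  have hb := nat_div_bounds (d := d) hq
  have hq' : (0 : ℝ) < q := by exact_mod_cast hq
  rw [abs_le]
  have ha1' : (1 : ℝ) ≤ a := by exact_mod_cast ha1
  have haq' : (a : ℝ) ≤ q := by exact_mod_cast haq
  have hsplit : (d : ℝ) / q = (N : ℝ) / q + 1 - (a : ℝ) / q := by
    rw [hdc]; field_simp
  have haq2 : (a : ℝ) / q ≤ 1 := by
    rw [div_le_one hq']; exact haq'
  have haq3 : (0 : ℝ) ≤ (a : ℝ) / q := by positivity
  constructor
  · linarith [hb.1, hsplit]
  · linarith [hb.2, hsplit]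
open Classical in
/-- The set of `n ∈ [1, N]` that are `m`-full and `≡ r (mod q)`. -/
noncomputable def Sx (m q r N : ℕ) : Finset ℕ :=
  (Finset.Icc 1 N).filter
    (fun n => n % q = r % q ∧ ∀ p : ℕ, p.Prime → p ∣ n → p ^ m ∣ n)

/-- Count of `k` with `k ^ m * Kf m c ∈ [1, N]` in the right class mod `q`. -/
def Ak (m q r N : ℕ) (c : Fin (m - 1) → ℕ) : Finset ℕ :=
  (Finset.Icc 1 N).filter
    (fun k => k ^ m * Kf m c ≤ N ∧ (k ^ m * Kf m c) % q = r % q)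

/-- Squarefree tuples with bounded `Kf`. -/
def Fsf (m N : ℕ) : Finset (Fin (m - 1) → ℕ) :=
  (Fintype.piFinset (fun _ : Fin (m - 1) => Finset.Icc 1 N)).filter
    (fun c => Squarefree (∏ i, c i) ∧ Kf m c ≤ N)

lemma decomp (m q r : ℕ) (hm : 2 ≤ m) (N : ℕ) :
    (Sx m q r N).card = ∑ c ∈ Fsf m N, (Ak m q r N c).card := by
  classical
  have hm1 : 1 ≤ m := by omega
  rw [← Finset.card_sigma]
  refine (Finset.card_bij (fun (a : (_ : Fin (m - 1) → ℕ) × ℕ) _ => a.2 ^ m * Kf m a.1)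
    ?_ ?_ ?_).symm
  · rintro ⟨c, k⟩ ha
    rw [Finset.mem_sigma] at ha
    dsimp only at ha ⊢
    obtain ⟨hc, hk⟩ := ha
    rw [Fsf, Finset.mem_filter] at hc
    obtain ⟨-, hsc, -⟩ := hc
    rw [Ak, Finset.mem_filter, Finset.mem_Icc] at hk
    obtain ⟨⟨hk1, -⟩, hle, hmod⟩ := hk
    rw [Sx, Finset.mem_filter, Finset.mem_Icc]
    have hkne : k ≠ 0 := by omega
    have hne : k ^ m * Kf m c ≠ 0 :=
      mul_ne_zero (pow_ne_zero _ hkne) (Kf_ne_zero (c_ne_zero hsc))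
    exact ⟨⟨by omega, hle⟩, hmod, full_of_rep hm1 hsc hkne⟩
  · rintro ⟨c₁, k₁⟩ h₁ ⟨c₂, k₂⟩ h₂ heq
    rw [Finset.mem_sigma] at h₁ h₂
    dsimp only at h₁ h₂ heq
    have hsc₁ := ((Finset.mem_filter.mp h₁.1).2).1
    have hsc₂ := ((Finset.mem_filter.mp h₂.1).2).1
    have hk₁ : k₁ ≠ 0 := by
      have := (Finset.mem_Icc.mp (Finset.mem_filter.mp h₁.2).1).1; omega
    have hk₂ : k₂ ≠ 0 := by
      have := (Finset.mem_Icc.mp (Finset.mem_filter.mp h₂.2).1).1; omega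
    obtain ⟨hk, hc⟩ := inj_lemma hm1 hsc₁ hsc₂ hk₁ hk₂ heq
    subst hk; subst hc; rfl
  · intro n hn
    rw [Sx, Finset.mem_filter, Finset.mem_Icc] at hn
    obtain ⟨⟨hn1, hnN⟩, hmod, hfull⟩ := hn
    obtain ⟨c, k, hsc, hkne, hrep⟩ := surj_lemma hm (by omega : n ≠ 0) hfull
    have hKne : Kf m c ≠ 0 := Kf_ne_zero (c_ne_zero hsc)
    have hKdvd : Kf m c ∣ n := by rw [hrep]; exact dvd_mul_left _ _
    have hKle : Kf m c ≤ N := le_trans (Nat.le_of_dvd (by omega) hKdvd) hnN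
    have hkm_dvd : k ^ m ∣ n := by rw [hrep]; exact dvd_mul_right _ _
    have hkle : k ≤ N := by
      calc k ≤ k ^ m := Nat.le_self_pow (by omega) k
        _ ≤ n := Nat.le_of_dvd (by omega) hkm_dvd
        _ ≤ N := hnN
    refine ⟨⟨c, k⟩, ?_, hrep.symm⟩
    rw [Finset.mem_sigma, Fsf, Ak, Finset.mem_filter, Finset.mem_filter, Finset.mem_Icc,
      Fintype.mem_piFinset]
    dsimp only
    refine ⟨⟨fun i => ?_, hsc, hKle⟩, ⟨by omega, hkle⟩, by omega, by rw [← hrep]; exact hmod⟩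
    rw [Finset.mem_Icc]
    have hci : c i ∣ Kf m c := dvd_trans (dvd_pow_self (c i) (by omega)) (Finset.dvd_prod_of_mem _ (Finset.mem_univ i))
    exact ⟨Nat.one_le_iff_ne_zero.mpr (c_ne_zero hsc i), le_trans (Nat.le_of_dvd (by omega) hci) hKle⟩
lemma Kf_pos_real {m : ℕ} {c : Fin (m - 1) → ℕ} (hsc : Squarefree (∏ i, c i)) :
    (0 : ℝ) < (Kf m c : ℝ) := by
  have := Nat.one_le_iff_ne_zero.mpr (Kf_ne_zero (c_ne_zero hsc))
  exact_mod_cast Nat.lt_of_lt_of_le Nat.zero_lt_one this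

lemma Ak_eq (m q r : ℕ) (hm : 2 ≤ m) {x : ℝ} (hx : 1 ≤ x) {c : Fin (m - 1) → ℕ}
    (hsc : Squarefree (∏ i, c i)) :
    Ak m q r ⌊x⌋₊ c = (Finset.Icc 1 ⌊(x / Kf m c) ^ ((m : ℝ))⁻¹⌋₊).filter
      (fun k : ℕ => ((k : ZMod q)) ^ m * ((Kf m c : ℕ) : ZMod q) = (r : ZMod q)) := by
  have hK1 : 1 ≤ Kf m c := Nat.one_le_iff_ne_zero.mpr (Kf_ne_zero (c_ne_zero hsc))
  have hKpos : (0 : ℝ) < (Kf m c : ℝ) := Kf_pos_real hsc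
  have hx0 : (0 : ℝ) ≤ x := by linarith
  have htnn : (0 : ℝ) ≤ (x / Kf m c) ^ ((m : ℝ))⁻¹ := Real.rpow_nonneg (by positivity) _
  have hiff : ∀ k : ℕ, (k ^ m * Kf m c ≤ ⌊x⌋₊ ↔ k ≤ ⌊(x / Kf m c) ^ ((m : ℝ))⁻¹⌋₊) := by
    intro k
    rw [Nat.le_floor_iff hx0, Nat.le_floor_iff htnn]
    push_cast
    rw [Real.le_rpow_inv_iff_of_pos (Nat.cast_nonneg k) (by positivity)
      (by exact_mod_cast Nat.lt_of_lt_of_le Nat.zero_lt_one (by omega : 1 ≤ m)),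
      Real.rpow_natCast, le_div_iff₀ hKpos]
  have hmodiff : ∀ k : ℕ, ((k ^ m * Kf m c) % q = r % q)
      ↔ ((k : ZMod q) ^ m * ((Kf m c : ℕ) : ZMod q) = (r : ZMod q)) := by
    intro k
    rw [show ((k : ZMod q) ^ m * ((Kf m c : ℕ) : ZMod q)) = ((k ^ m * Kf m c : ℕ) : ZMod q) by
      push_cast; ring]
    rw [ZMod.natCast_eq_natCast_iff]
    rfl
  ext k
  simp only [Ak, Finset.mem_filter, Finset.mem_Icc]
  constructor
  · rintro ⟨⟨h1, h2⟩, h3, h4⟩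
    exact ⟨⟨h1, (hiff k).mp h3⟩, (hmodiff k).mp h4⟩
  · rintro ⟨⟨h1, h2⟩, h3⟩
    have h5 : k ^ m * Kf m c ≤ ⌊x⌋₊ := (hiff k).mpr h2
    have h6 : k ≤ k ^ m * Kf m c :=
      le_trans (Nat.le_self_pow (by omega) k) (Nat.le_mul_of_pos_right _ (by omega))
    exact ⟨⟨h1, le_trans h6 h5⟩, h5, (hmodiff k).mpr h3⟩

/-- The finset of solutions `y` mod `q`. -/
def Ys (m q r : ℕ) [NeZero q] (c : Fin (m - 1) → ℕ) : Finset (ZMod q) :=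
  Finset.univ.filter (fun y : ZMod q => y ^ m * ((Kf m c : ℕ) : ZMod q) = (r : ZMod q))

lemma Ys_card_le (m q r : ℕ) [NeZero q] (c : Fin (m - 1) → ℕ) :
    (Ys m q r c).card ≤ q := by
  calc (Ys m q r c).card ≤ (Finset.univ : Finset (ZMod q)).card := Finset.card_filter_le _ _
    _ = q := by rw [Finset.card_univ, ZMod.card]

lemma Ak_est (m q r : ℕ) [NeZero q] (hm : 2 ≤ m) {x : ℝ} (hx : 1 ≤ x)
    {c : Fin (m - 1) → ℕ} (hsc : Squarefree (∏ i, c i)) :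
    |((Ak m q r ⌊x⌋₊ c).card : ℝ)
      - ((Ys m q r c).card : ℝ) * ((x / Kf m c) ^ ((m : ℝ))⁻¹ / q)| ≤ 2 * q := by
  have hq : 0 < q := Nat.pos_of_ne_zero (NeZero.ne q)
  have hq' : (0 : ℝ) < q := by exact_mod_cast hq
  have hKpos : (0 : ℝ) < (Kf m c : ℝ) := Kf_pos_real hsc
  set t : ℝ := (x / Kf m c) ^ ((m : ℝ))⁻¹ with ht_def
  have htnn : 0 ≤ t := Real.rpow_nonneg (by positivity) _
  set Nk : ℕ := ⌊t⌋₊ with hNk_def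
  rw [Ak_eq m q r hm hx hsc]
  -- fiberwise decomposition
  have hfib : ((Finset.Icc 1 Nk).filter
      (fun k : ℕ => ((k : ZMod q)) ^ m * ((Kf m c : ℕ) : ZMod q) = (r : ZMod q))).card
      = ∑ y ∈ Ys m q r c, ((Finset.Icc 1 Nk).filter (fun k : ℕ => ((k : ZMod q) = y))).card := by
    rw [Finset.card_eq_sum_card_fiberwise (f := fun k : ℕ => (k : ZMod q))
      (t := Ys m q r c) (fun k hk => by
        rw [Finset.mem_coe, Finset.mem_filter] at hk
        rw [Ys, Finset.mem_coe, Finset.mem_filter]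
        exact ⟨Finset.mem_univ _, hk.2⟩)]
    refine Finset.sum_congr rfl fun y hy => ?_
    rw [Finset.filter_filter]
    congr 1
    apply Finset.filter_congr
    intro k _
    rw [Ys, Finset.mem_filter] at hy
    constructor
    · rintro ⟨-, h⟩; exact h
    · intro h; exact ⟨by rw [h]; exact hy.2, h⟩
  rw [hfib]
  have hNkt : |((Nk : ℝ)) - t| ≤ 1 := by
    rw [abs_le]
    constructor
    · have := Nat.lt_floor_add_one t; linarith
    · have := Nat.floor_le htnn; linarith
  have hper : ∀ y ∈ Ys m q r c,
      |(((Finset.Icc 1 Nk).filter (fun k : ℕ => ((k : ZMod q) = y))).card : ℝ) - t / q| ≤ 2 := by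
    intro y _
    have h1 := count_class hq Nk y
    have h2 : |((Nk : ℝ)) / q - t / q| ≤ 1 := by
      rw [div_sub_div_same, abs_div, abs_of_pos hq']
      calc |((Nk : ℝ)) - t| / q ≤ 1 / q := by gcongr
        _ ≤ 1 := by rw [div_le_one hq']; exact_mod_cast hq
    calc |(((Finset.Icc 1 Nk).filter (fun k : ℕ => ((k : ZMod q) = y))).card : ℝ) - t / q|
        ≤ |(((Finset.Icc 1 Nk).filter (fun k : ℕ => ((k : ZMod q) = y))).card : ℝ) - (Nk : ℝ) / q|
          + |((Nk : ℝ)) / q - t / q| := abs_sub_le _ _ _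
      _ ≤ 1 + 1 := add_le_add h1 h2
      _ = 2 := by norm_num
  have hsplit : ((∑ y ∈ Ys m q r c,
        ((Finset.Icc 1 Nk).filter (fun k : ℕ => ((k : ZMod q) = y))).card : ℕ) : ℝ)
      - ((Ys m q r c).card : ℝ) * (t / q)
      = ∑ y ∈ Ys m q r c,
        ((((Finset.Icc 1 Nk).filter (fun k : ℕ => ((k : ZMod q) = y))).card : ℝ) - t / q) := by
    rw [Finset.sum_sub_distrib, Finset.sum_const, nsmul_eq_mul]
    push_cast
    ring
  rw [hsplit]
  calc |∑ y ∈ Ys m q r c,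
        ((((Finset.Icc 1 Nk).filter (fun k : ℕ => ((k : ZMod q) = y))).card : ℝ) - t / q)|
      ≤ ∑ y ∈ Ys m q r c,
        |(((Finset.Icc 1 Nk).filter (fun k : ℕ => ((k : ZMod q) = y))).card : ℝ) - t / q| :=
        Finset.abs_sum_le_sum_abs _ _
    _ ≤ ∑ _y ∈ Ys m q r c, (2 : ℝ) := Finset.sum_le_sum hper
    _ = ((Ys m q r c).card : ℝ) * 2 := by rw [Finset.sum_const, nsmul_eq_mul]
    _ ≤ (q : ℝ) * 2 := by
        have := Ys_card_le m q r c
        have : ((Ys m q r c).card : ℝ) ≤ q := by exact_mod_cast this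
        linarith
    _ = 2 * q := by ring
lemma summable_tuple {L : ℕ} (e : Fin L → ℝ) (he : ∀ i, 1 < e i) :
    Summable (fun c : Fin L → ℕ => ∏ i, ((c i : ℝ) ^ (e i))⁻¹) := by
  induction L with
  | zero => exact Summable.of_finite
  | succ n ih =>
    have h1 : Summable (fun k : ℕ => ((k : ℝ) ^ (e 0))⁻¹) :=
      Real.summable_nat_rpow_inv.mpr (he 0)
    have h2 : Summable (fun c : Fin n → ℕ => ∏ i, ((c i : ℝ) ^ (e i.succ))⁻¹) :=
      ih (fun i => e i.succ) (fun i => he i.succ)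
    have h3 := Summable.mul_of_nonneg (f := fun k : ℕ => ((k : ℝ) ^ (e 0))⁻¹)
      (g := fun c : Fin n → ℕ => ∏ i, ((c i : ℝ) ^ (e i.succ))⁻¹) h1 h2
      (fun k => by positivity) (fun c => by positivity)
    have einj : Function.Injective
        (fun c : Fin (n + 1) → ℕ => ((c 0, fun i => c i.succ) : ℕ × (Fin n → ℕ))) := by
      intro c c' h
      have h1 := congrArg Prod.fst h
      have h2 := congrArg Prod.snd h
      dsimp at h1 h2
      funext i
      refine Fin.cases ?_ ?_ i
      · exact h1
      · intro j
        exact congrFun h2 j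
    have h4 := h3.comp_injective einj
    refine h4.congr (fun c => ?_)
    simp [Function.comp, Fin.prod_univ_succ, mul_comm]

lemma one_lt_exp1 {m : ℕ} (hm : 2 ≤ m) (i : Fin (m - 1)) :
    (1 : ℝ) < 1 + ((i : ℕ) + 1 : ℝ) / m := by
  have hm' : (0 : ℝ) < m := by exact_mod_cast (by omega : 0 < m)
  have : (0 : ℝ) < ((i : ℕ) + 1 : ℝ) / m := by positivity
  linarith

/-- The summable product weight. -/
lemma summable_P (m : ℕ) (hm : 2 ≤ m) :
    Summable (fun c : Fin (m - 1) → ℕ =>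
      ∏ i : Fin (m - 1), ((c i : ℝ) ^ (1 + ((i : ℕ) + 1 : ℝ) / m))⁻¹) :=
  summable_tuple _ (one_lt_exp1 hm)

lemma summable_delta (m : ℕ) (hm : 2 ≤ m) :
    Summable (fun c : Fin (m - 1) → ℕ =>
      ∏ i : Fin (m - 1), ((c i : ℝ) ^ (1 + 1 / (2 * (m : ℝ))))⁻¹) := by
  refine summable_tuple _ (fun i => ?_)
  have hm' : (0 : ℝ) < m := by exact_mod_cast (by omega : 0 < m)
  have : (0 : ℝ) < 1 / (2 * (m : ℝ)) := by positivity
  linarith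

/-- The summand function (already divided by `q`). -/
noncomputable def hfun (m q r : ℕ) [NeZero q] (c : Fin (m - 1) → ℕ) : ℝ :=
  (1 / (q : ℝ)) * ((moebius (∏ i, c i) : ℝ) ^ 2
    * (∏ i : Fin (m - 1), ((c i : ℝ) ^ (1 + ((i : ℕ) + 1 : ℝ) / m))⁻¹)
    * ((Ys m q r c).card : ℝ))

lemma hfun_nonneg (m q r : ℕ) [NeZero q] (c : Fin (m - 1) → ℕ) : 0 ≤ hfun m q r c := by
  simp only [hfun]
  have h1 : (0:ℝ) ≤ (moebius (∏ i, c i) : ℝ) ^ 2 := sq_nonneg _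
  have h2 : (0:ℝ) ≤ ∏ i : Fin (m - 1), ((c i : ℝ) ^ (1 + ((i : ℕ) + 1 : ℝ) / m))⁻¹ :=
    Finset.prod_nonneg fun i _ => by positivity
  positivity

lemma hfun_le (m q r : ℕ) [NeZero q] (c : Fin (m - 1) → ℕ) :
    hfun m q r c ≤ ∏ i : Fin (m - 1), ((c i : ℝ) ^ (1 + ((i : ℕ) + 1 : ℝ) / m))⁻¹ := by
  have hq : 0 < q := Nat.pos_of_ne_zero (NeZero.ne q)
  have hq' : (0:ℝ) < q := by exact_mod_cast hq
  have hP : (0:ℝ) ≤ ∏ i : Fin (m - 1), ((c i : ℝ) ^ (1 + ((i : ℕ) + 1 : ℝ) / m))⁻¹ :=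
    Finset.prod_nonneg fun i _ => by positivity
  have hmu : (moebius (∏ i, c i) : ℝ) ^ 2 ≤ 1 := by
    by_cases hsq : Squarefree (∏ i, c i)
    · rw [show ((moebius (∏ i, c i) : ℤ) : ℝ) ^ 2 = (((moebius (∏ i, c i)) ^ 2 : ℤ) : ℝ) by
        push_cast; ring, moebius_sq_eq_one_of_squarefree hsq]
      norm_num
    · rw [moebius_eq_zero_of_not_squarefree hsq]
      norm_num
  have hY : ((Ys m q r c).card : ℝ) ≤ q := by exact_mod_cast Ys_card_le m q r c
  have hY0 : (0:ℝ) ≤ ((Ys m q r c).card : ℝ) := by positivity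
  simp only [hfun]
  calc (1 / (q : ℝ)) * ((moebius (∏ i, c i) : ℝ) ^ 2
        * (∏ i : Fin (m - 1), ((c i : ℝ) ^ (1 + ((i : ℕ) + 1 : ℝ) / m))⁻¹)
        * ((Ys m q r c).card : ℝ))
      ≤ (1 / (q : ℝ)) * (1
        * (∏ i : Fin (m - 1), ((c i : ℝ) ^ (1 + ((i : ℕ) + 1 : ℝ) / m))⁻¹) * (q : ℝ)) := by
        apply mul_le_mul_of_nonneg_left ?_ (by positivity)
        apply mul_le_mul (by apply mul_le_mul_of_nonneg_right hmu hP) hY hY0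
        positivity
    _ = ∏ i : Fin (m - 1), ((c i : ℝ) ^ (1 + ((i : ℕ) + 1 : ℝ) / m))⁻¹ := by
        field_simp
  
lemma summable_hfun (m q r : ℕ) [NeZero q] (hm : 2 ≤ m) : Summable (hfun m q r) :=
  Summable.of_nonneg_of_le (hfun_nonneg m q r) (hfun_le m q r) (summable_P m hm)

/-- Identification of the number of solutions mod `q` with the `Finset` count. -/
lemma Ycard_eq (m q r : ℕ) [NeZero q] (c : Fin (m - 1) → ℕ) :
    (Nat.card {y : ZMod q // y ^ m * (∏ i : Fin (m - 1), (c i : ZMod q) ^ (m + (i : ℕ) + 1))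
        = (r : ZMod q)} : ℝ) = ((Ys m q r c).card : ℝ) := by
  have hKf : (∏ i : Fin (m - 1), (c i : ZMod q) ^ (m + (i : ℕ) + 1))
      = ((Kf m c : ℕ) : ZMod q) := by
    rw [Kf]; push_cast; rfl
  congr 1
  rw [Nat.card_eq_fintype_card]
  simp_rw [hKf]
  rw [Fintype.card_subtype]
  rfl

/-- The main-term identity for squarefree tuples. -/
lemma prod_inv_eq (m : ℕ) (hm : 2 ≤ m) (c : Fin (m - 1) → ℕ) :
    ∏ i : Fin (m - 1), ((c i : ℝ) ^ (1 + ((i : ℕ) + 1 : ℝ) / m))⁻¹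
      = ((Kf m c : ℝ) ^ ((m : ℝ))⁻¹)⁻¹ := by
  have hm' : (m : ℝ) ≠ 0 := by exact_mod_cast (by omega : m ≠ 0)
  rw [Finset.prod_inv_distrib]
  congr 1
  rw [Kf]
  push_cast
  rw [← Real.finset_prod_rpow _ _ (fun i _ => by positivity) _]
  apply Finset.prod_congr rfl
  intro i _
  rw [← Real.rpow_natCast ((c i : ℝ)) (m + (i : ℕ) + 1), ← Real.rpow_mul (Nat.cast_nonneg _)]
  congr 1
  push_cast
  field_simp
  ring
lemma main_id (m q r : ℕ) [NeZero q] (hm : 2 ≤ m) {x : ℝ} (hx : 1 ≤ x)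
    {c : Fin (m - 1) → ℕ} (hsc : Squarefree (∏ i, c i)) :
    hfun m q r c * x ^ ((m : ℝ))⁻¹
      = ((Ys m q r c).card : ℝ) * ((x / Kf m c) ^ ((m : ℝ))⁻¹ / q) := by
  have hKpos : (0:ℝ) < (Kf m c : ℝ) := Kf_pos_real hsc
  have hx0 : (0:ℝ) < x := by linarith
  have hq' : (0:ℝ) < q := by
    exact_mod_cast Nat.pos_of_ne_zero (NeZero.ne q)
  have hmu : ((moebius (∏ i, c i) : ℤ) : ℝ) ^ 2 = 1 := by
    rw [show ((moebius (∏ i, c i) : ℤ) : ℝ) ^ 2 = (((moebius (∏ i, c i)) ^ 2 : ℤ) : ℝ) by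
      push_cast; ring, moebius_sq_eq_one_of_squarefree hsc]
    norm_num
  simp only [hfun]
  rw [hmu, prod_inv_eq m hm c, Real.div_rpow (le_of_lt hx0) (le_of_lt hKpos)]
  have hKr : (0:ℝ) < (Kf m c : ℝ) ^ ((m : ℝ))⁻¹ := Real.rpow_pos_of_pos hKpos _
  simp only [one_mul, div_eq_mul_inv, one_div]
  ring

/-- The comparison constant. -/
noncomputable def Cd (m : ℕ) : ℝ :=
  ∑' c : Fin (m - 1) → ℕ, ∏ i : Fin (m - 1), ((c i : ℝ) ^ (1 + 1 / (2 * (m : ℝ))))⁻¹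

lemma Cd_nonneg (m : ℕ) : 0 ≤ Cd m :=
  tsum_nonneg fun c => Finset.prod_nonneg fun i _ => by positivity

lemma Fsf_card_le (m : ℕ) (hm : 2 ≤ m) {x : ℝ} (hx : 1 ≤ x) :
    ((Fsf m ⌊x⌋₊).card : ℝ) ≤ Cd m * x ^ ((1 + 1 / (2 * (m : ℝ))) / ((m : ℝ) + 1)) := by
  have hx0 : (0:ℝ) < x := by linarith
  set δ : ℝ := 1 + 1 / (2 * (m : ℝ)) with hδ_def
  have hm' : (0:ℝ) < m := by exact_mod_cast (by omega : 0 < m)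
  have hδ0 : 0 ≤ δ := by rw [hδ_def]; positivity
  have key : ∀ c ∈ Fsf m ⌊x⌋₊,
      (1 : ℝ) ≤ x ^ (δ / ((m : ℝ) + 1)) * ∏ i : Fin (m - 1), ((c i : ℝ) ^ δ)⁻¹ := by
    intro c hc
    rw [Fsf, Finset.mem_filter, Fintype.mem_piFinset] at hc
    obtain ⟨hci, hsc, hKle⟩ := hc
    have hc1 : ∀ i, 1 ≤ c i := fun i => (Finset.mem_Icc.mp (hci i)).1
    have hQ1 : 1 ≤ ∏ i, c i := Finset.one_le_prod' fun i _ => hc1 i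
    have hQpos : (0:ℝ) < ((∏ i, c i : ℕ) : ℝ) := by exact_mod_cast hQ1
    have hnat : (∏ i, c i) ^ (m + 1) ≤ Kf m c := by
      rw [← Finset.prod_pow]
      exact Finset.prod_le_prod' fun i _ => Nat.pow_le_pow_right (hc1 i) (by omega)
    have hQx : ((∏ i, c i : ℕ) : ℝ) ^ ((m : ℕ) + 1 : ℕ) ≤ x := by
      calc ((∏ i, c i : ℕ) : ℝ) ^ ((m : ℕ) + 1 : ℕ) = (((∏ i, c i) ^ (m + 1) : ℕ) : ℝ) := by
            push_cast; ring
        _ ≤ ((Kf m c : ℕ) : ℝ) := by exact_mod_cast hnat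
        _ ≤ (⌊x⌋₊ : ℝ) := by exact_mod_cast hKle
        _ ≤ x := Nat.floor_le (le_of_lt hx0)
    have hQle : ((∏ i, c i : ℕ) : ℝ) ≤ x ^ (((m : ℝ) + 1))⁻¹ := by
      rw [Real.le_rpow_inv_iff_of_pos (le_of_lt hQpos) (le_of_lt hx0) (by positivity)]
      rw [show ((m : ℝ) + 1) = (((m + 1 : ℕ) : ℕ) : ℝ) by push_cast; ring, Real.rpow_natCast]
      exact hQx
    have hQδ : ((∏ i, c i : ℕ) : ℝ) ^ δ ≤ x ^ (δ / ((m : ℝ) + 1)) := by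
      have h1 : ((∏ i, c i : ℕ) : ℝ) ^ δ ≤ (x ^ (((m : ℝ) + 1))⁻¹) ^ δ :=
        Real.rpow_le_rpow (le_of_lt hQpos) hQle hδ0
      rw [← Real.rpow_mul (le_of_lt hx0)] at h1
      rwa [div_eq_inv_mul]
    have hprodinv : ∏ i : Fin (m - 1), ((c i : ℝ) ^ δ)⁻¹ = (((∏ i, c i : ℕ) : ℝ) ^ δ)⁻¹ := by
      rw [Finset.prod_inv_distrib]
      congr 1
      push_cast
      rw [Real.finset_prod_rpow _ _ (fun i _ => Nat.cast_nonneg _) δ]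
    rw [hprodinv, ← div_eq_mul_inv, le_div_iff₀ (Real.rpow_pos_of_pos hQpos δ), one_mul]
    exact hQδ
  calc ((Fsf m ⌊x⌋₊).card : ℝ) = ∑ _c ∈ Fsf m ⌊x⌋₊, (1 : ℝ) := by
        rw [Finset.sum_const, nsmul_eq_mul, mul_one]
    _ ≤ ∑ c ∈ Fsf m ⌊x⌋₊, x ^ (δ / ((m : ℝ) + 1)) * ∏ i : Fin (m - 1), ((c i : ℝ) ^ δ)⁻¹ :=
        Finset.sum_le_sum key
    _ = x ^ (δ / ((m : ℝ) + 1)) * ∑ c ∈ Fsf m ⌊x⌋₊, ∏ i : Fin (m - 1), ((c i : ℝ) ^ δ)⁻¹ := by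
        rw [Finset.mul_sum]
    _ ≤ x ^ (δ / ((m : ℝ) + 1)) * Cd m := by
        apply mul_le_mul_of_nonneg_left ?_ (by positivity)
        exact Summable.sum_le_tsum _ (fun c _ => Finset.prod_nonneg fun i _ => by positivity)
          (summable_delta m hm)
    _ = Cd m * x ^ (δ / ((m : ℝ) + 1)) := mul_comm _ _

/-- Covering family of finsets. -/
noncomputable def cover (m : ℕ) (x : ℝ) : Finset (Fin (m - 1) → ℕ) :=
  Fsf m ⌊x⌋₊ ∪ (Fintype.piFinset (fun _ : Fin (m - 1) => Finset.range (⌊x⌋₊ + 1))).filter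
    (fun c => ¬ Squarefree (∏ i, c i))

lemma cover_monotone (m : ℕ) : Monotone (cover m) := by
  intro x y hxy
  have hN : ⌊x⌋₊ ≤ ⌊y⌋₊ := Nat.floor_mono hxy
  apply Finset.union_subset_union
  · intro c hc
    rw [Fsf, Finset.mem_filter, Fintype.mem_piFinset] at hc ⊢
    exact ⟨fun i => Finset.mem_Icc.mpr (by have := Finset.mem_Icc.mp (hc.1 i); omega),
      hc.2.1, le_trans hc.2.2 hN⟩
  · intro c hc
    rw [Finset.mem_filter, Fintype.mem_piFinset] at hc ⊢
    exact ⟨fun i => Finset.mem_range.mpr (by have := Finset.mem_range.mp (hc.1 i); omega), hc.2⟩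

lemma cover_exists (m : ℕ) (hm : 2 ≤ m) (c : Fin (m - 1) → ℕ) : ∃ x : ℝ, c ∈ cover m x := by
  by_cases hsc : Squarefree (∏ i, c i)
  · refine ⟨(Kf m c : ℝ), Finset.mem_union_left _ ?_⟩
    rw [Fsf, Finset.mem_filter, Fintype.mem_piFinset, Nat.floor_natCast]
    have hK0 : Kf m c ≠ 0 := Kf_ne_zero (c_ne_zero hsc)
    refine ⟨fun i => Finset.mem_Icc.mpr
      ⟨Nat.one_le_iff_ne_zero.mpr (c_ne_zero hsc i), ?_⟩, hsc, le_refl _⟩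
    exact Nat.le_of_dvd (by omega)
      (dvd_trans (dvd_pow_self (c i) (by omega)) (Finset.dvd_prod_of_mem _ (Finset.mem_univ i)))
  · refine ⟨((∑ i, c i : ℕ) : ℝ), Finset.mem_union_right _ ?_⟩
    rw [Finset.mem_filter, Fintype.mem_piFinset, Nat.floor_natCast]
    refine ⟨fun i => Finset.mem_range.mpr ?_, hsc⟩
    have : c i ≤ ∑ j, c j := Finset.single_le_sum (fun j _ => Nat.zero_le _) (Finset.mem_univ i)
    omega

lemma tendsto_cover (m : ℕ) (hm : 2 ≤ m) : Tendsto (cover m) atTop atTop :=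
  tendsto_atTop_finset_of_monotone (cover_monotone m) (cover_exists m hm)

lemma tsum_compl_eq (m q r : ℕ) [NeZero q] (hm : 2 ≤ m) (x : ℝ) :
    ∑' (c : ↑((↑(Fsf m ⌊x⌋₊) : Set (Fin (m - 1) → ℕ))ᶜ)), hfun m q r ↑c
      = ∑' (c : ↑((↑(cover m x) : Set (Fin (m - 1) → ℕ))ᶜ)), hfun m q r ↑c := by
  have hsum := summable_hfun m q r hm
  have h1 := Summable.sum_add_tsum_compl (s := Fsf m ⌊x⌋₊) hsum
  have h2 := Summable.sum_add_tsum_compl (s := cover m x) hsum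
  have h3 : ∑ c ∈ cover m x, hfun m q r c = ∑ c ∈ Fsf m ⌊x⌋₊, hfun m q r c := by
    refine (Finset.sum_subset Finset.subset_union_left fun c hc hnc => ?_).symm
    simp only [cover, Finset.mem_union] at hc
    rcases hc with h | h
    · exact absurd h hnc
    · rw [Finset.mem_filter] at h
      simp only [hfun, moebius_eq_zero_of_not_squarefree h.2]
      norm_num
  linarith

lemma tail_tendsto (m q r : ℕ) [NeZero q] (hm : 2 ≤ m) :
    Tendsto (fun x : ℝ =>
        ∑' (c : ↑((↑(cover m x) : Set (Fin (m - 1) → ℕ))ᶜ)), hfun m q r ↑c)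
      atTop (nhds 0) := by
  have h := (tendsto_tsum_compl_atTop_zero (hfun m q r)).comp (tendsto_cover m hm)
  exact h

lemma tail_nonneg (m q r : ℕ) [NeZero q] (hm : 2 ≤ m) (s : Finset (Fin (m - 1) → ℕ)) :
    0 ≤ ∑' (c : ↑((↑s : Set (Fin (m - 1) → ℕ))ᶜ)), hfun m q r ↑c :=
  tsum_nonneg fun c => hfun_nonneg m q r _
end Stmt12

open Stmt12 in
/-- The number of `m`-full integers `k ≤ x` with `k ≡ r (mod q)` is
`ρ(r,q)·x^{1/m} + o_q(x^{1/m})`, where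
`ρ(r,q) = q^{-1} ∑_{k₂,…,k_m} μ(k₂⋯k_m)² k₂^{-1-1/m} ⋯ k_m^{-(2-1/m)}
  · #{y mod q : y^m k₂^{m+1} ⋯ k_m^{2m-1} = r}`. -/
theorem stmt_12 (m q : ℕ) (hm : 2 ≤ m) (hq : 0 < q) (r : ℕ) :
    Tendsto (fun x : ℝ =>
        ((Nat.card {n : ℕ // 1 ≤ n ∧ (n : ℝ) ≤ x ∧ n % q = r % q ∧
            ∀ p : ℕ, p.Prime → p ∣ n → p ^ m ∣ n} : ℝ)
          - ((1 / (q : ℝ)) * ∑' c : Fin (m - 1) → ℕ,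
              (moebius (∏ i, c i) : ℝ) ^ 2
                * (∏ i : Fin (m - 1), ((c i : ℝ) ^ (1 + ((i : ℕ) + 1 : ℝ) / m))⁻¹)
                * (Nat.card {y : ZMod q //
                    y ^ m * (∏ i : Fin (m - 1), (c i : ZMod q) ^ (m + (i : ℕ) + 1))
                      = (r : ZMod q)} : ℝ))
            * x ^ (1 / (m : ℝ)))
          / x ^ (1 / (m : ℝ)))
      atTop (nhds 0) := by
  haveI : NeZero q := ⟨hq.ne'⟩
  have hm' : (0 : ℝ) < m := by exact_mod_cast (by omega : 0 < m)
  have hq' : (0 : ℝ) < q := by exact_mod_cast hq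
  set e₁ : ℝ := (1 + 1 / (2 * (m : ℝ))) / ((m : ℝ) + 1) with he₁
  have hyval : e₁ - 1 / (m : ℝ) = -(1 / (2 * (m : ℝ) * ((m : ℝ) + 1))) := by
    rw [he₁]
    field_simp
    ring
  set g : ℝ → ℝ := fun x => (2 * q * Cd m) * x ^ (e₁ - 1 / (m : ℝ))
      + ∑' (c : ↑((↑(cover m x) : Set (Fin (m - 1) → ℕ))ᶜ)), hfun m q r ↑c with hg_def
  apply squeeze_zero_norm' (a := g)
  · -- eventual bound
    filter_upwards [eventually_ge_atTop (1 : ℝ)] with x hx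
    have hx0 : (0 : ℝ) < x := lt_of_lt_of_le one_pos hx
    have hxm : (0 : ℝ) < x ^ (1 / (m : ℝ)) := Real.rpow_pos_of_pos hx0 _
    have hsum := summable_hfun m q r hm
    -- identification of the count
    have hA : (Nat.card {n : ℕ // 1 ≤ n ∧ (n : ℝ) ≤ x ∧ n % q = r % q ∧
          ∀ p : ℕ, p.Prime → p ∣ n → p ^ m ∣ n} : ℝ)
        = ∑ c ∈ Fsf m ⌊x⌋₊, ((Ak m q r ⌊x⌋₊ c).card : ℝ) := by
      have h1 : Nat.card {n : ℕ // 1 ≤ n ∧ (n : ℝ) ≤ x ∧ n % q = r % q ∧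
          ∀ p : ℕ, p.Prime → p ∣ n → p ^ m ∣ n} = (Sx m q r ⌊x⌋₊).card := by
        rw [← Nat.card_eq_finsetCard]
        apply Nat.card_congr
        apply Equiv.subtypeEquivRight
        intro n
        simp only [Sx, Finset.mem_filter, Finset.mem_Icc, Nat.le_floor_iff (le_of_lt hx0)]
        tauto
      rw [h1, decomp m q r hm ⌊x⌋₊]
      push_cast
      rfl
    -- identification of the main term
    have hB : (1 / (q : ℝ)) * (∑' c : Fin (m - 1) → ℕ,
          (moebius (∏ i, c i) : ℝ) ^ 2
            * (∏ i : Fin (m - 1), ((c i : ℝ) ^ (1 + ((i : ℕ) + 1 : ℝ) / m))⁻¹)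
            * (Nat.card {y : ZMod q //
                y ^ m * (∏ i : Fin (m - 1), (c i : ZMod q) ^ (m + (i : ℕ) + 1))
                  = (r : ZMod q)} : ℝ))
        = ∑ c ∈ Fsf m ⌊x⌋₊, hfun m q r c
          + ∑' (c : ↑((↑(cover m x) : Set (Fin (m - 1) → ℕ))ᶜ)), hfun m q r ↑c := by
      have h2 : (1 / (q : ℝ)) * (∑' c : Fin (m - 1) → ℕ,
            (moebius (∏ i, c i) : ℝ) ^ 2
              * (∏ i : Fin (m - 1), ((c i : ℝ) ^ (1 + ((i : ℕ) + 1 : ℝ) / m))⁻¹)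
              * (Nat.card {y : ZMod q //
                  y ^ m * (∏ i : Fin (m - 1), (c i : ZMod q) ^ (m + (i : ℕ) + 1))
                    = (r : ZMod q)} : ℝ))
          = ∑' c : Fin (m - 1) → ℕ, hfun m q r c := by
        rw [← tsum_mul_left]
        exact tsum_congr fun c => by simp only [hfun]; rw [Ycard_eq m q r c]
      rw [h2, ← Summable.sum_add_tsum_compl (s := Fsf m ⌊x⌋₊) hsum, tsum_compl_eq m q r hm x]
    rw [Real.norm_eq_abs, hA, hB, abs_div, abs_of_pos hxm, div_le_iff₀ hxm]
    set tl : ℝ := ∑' (c : ↑((↑(cover m x) : Set (Fin (m - 1) → ℕ))ᶜ)), hfun m q r ↑c with htl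
    have htl0 : 0 ≤ tl := tail_nonneg m q r hm _
    have hsplit : ∑ c ∈ Fsf m ⌊x⌋₊, ((Ak m q r ⌊x⌋₊ c).card : ℝ)
        - (∑ c ∈ Fsf m ⌊x⌋₊, hfun m q r c + tl) * x ^ (1 / (m : ℝ))
        = (∑ c ∈ Fsf m ⌊x⌋₊,
            (((Ak m q r ⌊x⌋₊ c).card : ℝ) - hfun m q r c * x ^ (1 / (m : ℝ))))
          - tl * x ^ (1 / (m : ℝ)) := by
      rw [Finset.sum_sub_distrib, ← Finset.sum_mul]
      ring
    rw [hsplit]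
    have hterm : ∀ c ∈ Fsf m ⌊x⌋₊,
        |((Ak m q r ⌊x⌋₊ c).card : ℝ) - hfun m q r c * x ^ (1 / (m : ℝ))| ≤ 2 * q := by
      intro c hc
      have hsc : Squarefree (∏ i, c i) := (Finset.mem_filter.mp hc).2.1
      rw [show (1 / (m : ℝ)) = ((m : ℝ))⁻¹ from one_div _, main_id m q r hm hx hsc]
      exact Ak_est m q r hm hx hsc
    have hcard := Fsf_card_le m hm hx
    calc |(∑ c ∈ Fsf m ⌊x⌋₊,
            (((Ak m q r ⌊x⌋₊ c).card : ℝ) - hfun m q r c * x ^ (1 / (m : ℝ))))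
          - tl * x ^ (1 / (m : ℝ))|
        ≤ |∑ c ∈ Fsf m ⌊x⌋₊,
            (((Ak m q r ⌊x⌋₊ c).card : ℝ) - hfun m q r c * x ^ (1 / (m : ℝ)))|
          + |tl * x ^ (1 / (m : ℝ))| := abs_sub _ _
      _ ≤ (2 * q) * ((Fsf m ⌊x⌋₊).card : ℝ) + tl * x ^ (1 / (m : ℝ)) := by
          apply add_le_add
          · calc |∑ c ∈ Fsf m ⌊x⌋₊,
                (((Ak m q r ⌊x⌋₊ c).card : ℝ) - hfun m q r c * x ^ (1 / (m : ℝ)))|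
                ≤ ∑ c ∈ Fsf m ⌊x⌋₊,
                  |((Ak m q r ⌊x⌋₊ c).card : ℝ) - hfun m q r c * x ^ (1 / (m : ℝ))| :=
                  Finset.abs_sum_le_sum_abs _ _
              _ ≤ ∑ _c ∈ Fsf m ⌊x⌋₊, (2 * (q : ℝ)) := Finset.sum_le_sum hterm
              _ = (2 * q) * ((Fsf m ⌊x⌋₊).card : ℝ) := by
                  rw [Finset.sum_const, nsmul_eq_mul]; ring
          · rw [abs_of_nonneg (by positivity)]
      _ ≤ (2 * q) * (Cd m * x ^ e₁) + tl * x ^ (1 / (m : ℝ)) := by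
          apply add_le_add_left
          apply mul_le_mul_of_nonneg_left hcard (by positivity)
      _ = g x * x ^ (1 / (m : ℝ)) := by
          have hxe : x ^ (e₁ - 1 / (m : ℝ)) * x ^ (1 / (m : ℝ)) = x ^ e₁ := by
            rw [← Real.rpow_add hx0]
            congr 1
            ring
          rw [hg_def]
          dsimp only
          rw [add_mul, mul_assoc _ (x ^ (e₁ - 1 / (m : ℝ))), hxe, ← htl]
          ring
  · -- `g → 0`
    have h1 : Tendsto (fun x : ℝ => (2 * q * Cd m) * x ^ (e₁ - 1 / (m : ℝ)))
        atTop (nhds 0) := by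
      have hy : (0 : ℝ) < 1 / (2 * (m : ℝ) * ((m : ℝ) + 1)) := by positivity
      have h := (tendsto_rpow_neg_atTop hy).const_mul (2 * (q : ℝ) * Cd m)
      rw [mul_zero] at h
      refine h.congr fun x => ?_
      rw [hyval]
    have h2 := tail_tendsto m q r hm
    have h3 := h1.add h2
    rw [add_zero] at h3
    exact h3
end

section
/- Let f ∈ ℤ[x₁,…,x_n] be a smooth form of degree d with n > 2^d(d−1), and set c = n·2^{−d}/(d−1) − 1 > 0. Suppose the complete exponential sums S_{a,p^r} = ∑_{t ∈ (ℤ/p^rℤ)^n} e(a·f(t)/p^r) satisfy |S_{a,p^r}| ≪ p^{r(n−c−2)} for p ∤ a. Then for all ν ∈ ℤ and all m ≥ 1: |∑_{r ≥ m} p^{−rn}·∑_{a mod p^r, p∤a} S_{a,p^r}·e(−aν/p^r)| ≪ p^{−m(1+c)}, with implied constant depending only on f; in particular the local density lim_{M→∞} p^{−M(n−1)}·#{t ∈ (ℤ/p^Mℤ)^n : f(t) ≡ ν (mod p^M)} equals 1 + O(p^{−1−c}) uniformly in ν. -/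
open Finset Filter MvPolynomial

private lemma orth18 (N : ℕ) (hN : 0 < N) (x : ℤ) :
    ∑ a ∈ Finset.range N, Complex.exp (2 * Real.pi * Complex.I * (a : ℂ) * (x : ℂ) / (N : ℂ))
      = if (N : ℤ) ∣ x then (N : ℂ) else 0 := by
  have hNC : (N : ℂ) ≠ 0 := by exact_mod_cast hN.ne'
  set ζ : ℂ := Complex.exp (2 * Real.pi * Complex.I * (x : ℂ) / (N : ℂ)) with hζ
  have hpow : ∀ a : ℕ, Complex.exp (2 * Real.pi * Complex.I * (a : ℂ) * (x : ℂ) / (N : ℂ)) = ζ ^ a := by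
    intro a
    rw [hζ, ← Complex.exp_nat_mul]
    congr 1
    ring
  simp only [hpow]
  by_cases hdvd : (N : ℤ) ∣ x
  · obtain ⟨k, hk⟩ := id hdvd
    have hζ1 : ζ = 1 := by
      rw [hζ, hk]
      have : 2 * Real.pi * Complex.I * ((N : ℤ) * (k : ℤ) : ℤ) / (N : ℂ) = (k : ℤ) * (2 * Real.pi * Complex.I) := by
        push_cast
        field_simp
      rw [this, Complex.exp_int_mul_two_pi_mul_I]
    simp [hζ1, hdvd]
  · have hζ1 : ζ ≠ 1 := by
      intro h
      rw [hζ, Complex.exp_eq_one_iff] at h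
      obtain ⟨k, hk⟩ := h
      apply hdvd
      refine ⟨k, ?_⟩
      rw [mul_comm]
      have h2 : (2 * Real.pi * Complex.I : ℂ) ≠ 0 := by
        simp [Real.pi_ne_zero, Complex.I_ne_zero, Complex.ofReal_ne_zero]
      have hx : (x : ℂ) = ((k * N : ℤ) : ℂ) := by
        field_simp at hk
        have hk' : 2 * (Real.pi : ℂ) * Complex.I * (x : ℂ)
            = 2 * (Real.pi : ℂ) * Complex.I * ((k : ℂ) * (N : ℂ)) := by
          rw [hk]; ring
        have := mul_left_cancel₀ h2 hk'
        push_cast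
        exact this
      exact_mod_cast hx
    rw [geom_sum_eq hζ1]
    have hζN : ζ ^ N = 1 := by
      rw [hζ, ← Complex.exp_nat_mul]
      have : (N : ℂ) * (2 * Real.pi * Complex.I * (x : ℂ) / (N : ℂ)) = (x : ℤ) * (2 * Real.pi * Complex.I) := by
        field_simp
      rw [this, Complex.exp_int_mul_two_pi_mul_I]
    rw [hζN]
    simp [hdvd]

private lemma evalCast18 {n : ℕ} {R : Type*} [CommRing R] (φ : ℤ →+* R)
    (g : MvPolynomial (Fin n) ℤ) (v : Fin n → ℤ) :
    φ (MvPolynomial.eval v g) = MvPolynomial.eval (fun i => φ (v i)) (g.map φ) := by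
  rw [MvPolynomial.eval_map]
  have h := MvPolynomial.eval₂_comp_left φ (RingHom.id ℤ) v g
  simp only [Function.comp, RingHom.comp_id, MvPolynomial.eval₂_id] at h
  exact h

private lemma dvdEvalSub18 {n : ℕ} (g : MvPolynomial (Fin n) ℤ) (N : ℕ)
    (t u : Fin n → ℤ) (h : ∀ i, (N : ℤ) ∣ (t i - u i)) :
    (N : ℤ) ∣ MvPolynomial.eval t g - MvPolynomial.eval u g := by
  rw [← ZMod.intCast_zmod_eq_zero_iff_dvd]
  push_cast
  rw [sub_eq_zero]
  have h1 := evalCast18 (Int.castRingHom (ZMod N)) g t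
  have h2 := evalCast18 (Int.castRingHom (ZMod N)) g u
  simp only [Int.coe_castRingHom] at h1 h2
  rw [h1, h2]
  have hco : (fun i => ((t i : ℤ) : ZMod N)) = (fun i => ((u i : ℤ) : ZMod N)) := by
    funext i
    have hi := h i
    rw [← ZMod.intCast_zmod_eq_zero_iff_dvd] at hi
    push_cast at hi
    linear_combination hi
  rw [hco]

private lemma fiberCard18 (R Q : ℕ) (hR : 0 < R) (hQ : 0 < Q)
    (h : R ∣ R * Q) (c : ZMod R) :
    haveI : NeZero R := ⟨hR.ne'⟩
    haveI : NeZero (R * Q) := ⟨by positivity⟩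
    Fintype.card {x : ZMod (R * Q) // ZMod.castHom h (ZMod R) x = c} = Q := by
  haveI : NeZero R := ⟨hR.ne'⟩
  haveI : NeZero (R * Q) := ⟨by positivity⟩
  have hcv : c.val < R := ZMod.val_lt c
  have key : ∀ k : Fin Q, ZMod.castHom h (ZMod R) ((c.val + R * (k : ℕ) : ℕ) : ZMod (R * Q)) = c := by
    intro k
    rw [map_natCast]
    push_cast
    simp [ZMod.natCast_self, ZMod.natCast_val, ZMod.cast_id]
  set φ : Fin Q → {x : ZMod (R * Q) // ZMod.castHom h (ZMod R) x = c} :=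
    fun k => ⟨((c.val + R * (k : ℕ) : ℕ) : ZMod (R * Q)), key k⟩ with hφ
  have hlt : ∀ k : Fin Q, c.val + R * (k : ℕ) < R * Q := by
    intro k
    calc c.val + R * (k : ℕ) < R + R * (k : ℕ) := by omega
    _ = R * ((k : ℕ) + 1) := by ring
    _ ≤ R * Q := Nat.mul_le_mul_left R k.2
  have hval : ∀ k : Fin Q, (((c.val + R * (k : ℕ) : ℕ) : ZMod (R * Q))).val = c.val + R * (k : ℕ) := by
    intro k
    rw [ZMod.val_natCast, Nat.mod_eq_of_lt (hlt k)]
  have hinj : Function.Injective φ := by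
    intro k₁ k₂ hk
    have : (φ k₁).1.val = (φ k₂).1.val := by rw [hk]
    rw [hval k₁, hval k₂] at this
    have := Nat.eq_of_mul_eq_mul_left hR (by omega : R * (k₁ : ℕ) = R * (k₂ : ℕ))
    exact Fin.ext this
  have hsurj : Function.Surjective φ := by
    rintro ⟨x, hx⟩
    have hxv : x.val % R = c.val := by
      have : ZMod.castHom h (ZMod R) x = ((x.val : ℕ) : ZMod R) := by
        conv_lhs => rw [← ZMod.natCast_rightInverse x]
        rw [map_natCast]
      rw [this] at hx
      rw [← hx, ZMod.val_natCast]
    have hklt : x.val / R < Q := by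
      have := ZMod.val_lt x
      exact Nat.div_lt_of_lt_mul this
    refine ⟨⟨x.val / R, hklt⟩, ?_⟩
    apply Subtype.ext
    show ((c.val + R * (x.val / R) : ℕ) : ZMod (R * Q)) = x
    rw [← hxv, Nat.mod_add_div]
    exact ZMod.natCast_rightInverse x
  simpa using (Fintype.card_of_bijective ⟨hinj, hsurj⟩).symm

private lemma fiberCardDvd18 (R N : ℕ) (hR : 0 < R) (hN : 0 < N)
    (h : R ∣ N) (c : ZMod R) :
    haveI : NeZero R := ⟨hR.ne'⟩
    haveI : NeZero N := ⟨hN.ne'⟩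
    Fintype.card {x : ZMod N // ZMod.castHom h (ZMod R) x = c} = N / R := by
  obtain ⟨Q, rfl⟩ := h
  have hQ : 0 < Q := by
    rcases Nat.eq_zero_or_pos Q with h0 | h0
    · subst h0; simp at hN
    · exact h0
  haveI : NeZero R := ⟨hR.ne'⟩
  haveI : NeZero (R * Q) := ⟨hN.ne'⟩
  rw [Nat.mul_div_cancel_left Q hR]
  exact fiberCard18 R Q hR hQ ⟨Q, rfl⟩ c

private lemma fiberCardPi18 (n R N : ℕ) (hR : 0 < R) (hN : 0 < N)
    (h : R ∣ N) (u : Fin n → ZMod R) :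
    haveI : NeZero R := ⟨hR.ne'⟩
    haveI : NeZero N := ⟨hN.ne'⟩
    Fintype.card {t : Fin n → ZMod N //
      (fun i => ZMod.castHom h (ZMod R) (t i)) = u} = (N / R) ^ n := by
  haveI : NeZero R := ⟨hR.ne'⟩
  haveI : NeZero N := ⟨hN.ne'⟩
  have e1 : {t : Fin n → ZMod N // (fun i => ZMod.castHom h (ZMod R) (t i)) = u}
      ≃ {t : Fin n → ZMod N // ∀ i, ZMod.castHom h (ZMod R) (t i) = u i} :=
    Equiv.subtypeEquivRight (fun t => by rw [funext_iff])
  have e2 := Equiv.subtypePiEquivPi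
    (p := fun (i : Fin n) (x : ZMod N) => ZMod.castHom h (ZMod R) x = u i)
  rw [Fintype.card_congr (e1.trans e2), Fintype.card_pi]
  simp only [fiberCardDvd18 R N hR hN h]
  simp

private lemma exp_shift18 (R : ℂ) (hR : R ≠ 0) (b : ℕ) (X : ℂ) (k : ℤ) :
    Complex.exp (2 * Real.pi * Complex.I * (b : ℂ) * (X + R * (k : ℂ)) / R)
      = Complex.exp (2 * Real.pi * Complex.I * (b : ℂ) * X / R) := by
  have hsplit : 2 * (Real.pi : ℂ) * Complex.I * (b : ℂ) * (X + R * (k : ℂ)) / R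
      = 2 * (Real.pi : ℂ) * Complex.I * (b : ℂ) * X / R
        + (((b * k : ℤ) : ℂ)) * (2 * Real.pi * Complex.I) * (R / R) := by
    push_cast
    ring
  rw [hsplit, div_self hR, mul_one, Complex.exp_add,
    Complex.exp_int_mul_two_pi_mul_I, mul_one]

private lemma lift18 (n p : ℕ) (hp : p.Prime) (f : MvPolynomial (Fin n) ℤ)
    (b r M : ℕ) (hr : r ≤ M) :
    haveI : NeZero p := ⟨hp.ne_zero⟩
    ∑ t : Fin n → ZMod (p ^ M),
        Complex.exp (2 * Real.pi * Complex.I * (b : ℂ) *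
          ((MvPolynomial.eval (fun i => ((t i).val : ℤ)) f : ℤ) : ℂ) / ((p ^ r : ℕ) : ℂ))
      = ((p ^ (M - r) : ℕ) : ℂ) ^ n *
        ∑ u : Fin n → ZMod (p ^ r),
          Complex.exp (2 * Real.pi * Complex.I * (b : ℂ) *
            ((MvPolynomial.eval (fun i => ((u i).val : ℤ)) f : ℤ) : ℂ) / ((p ^ r : ℕ) : ℂ)) := by
  haveI : NeZero p := ⟨hp.ne_zero⟩
  have hppos := hp.pos
  have hR : 0 < p ^ r := pow_pos hppos r
  have hN : 0 < p ^ M := pow_pos hppos M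
  have hRC : ((p ^ r : ℕ) : ℂ) ≠ 0 := by exact_mod_cast hR.ne'
  have hdvd : p ^ r ∣ p ^ M := pow_dvd_pow p hr
  set π : (Fin n → ZMod (p ^ M)) → (Fin n → ZMod (p ^ r)) :=
    fun t i => ZMod.castHom hdvd (ZMod (p ^ r)) (t i) with hπ
  set e : (Fin n → ZMod (p ^ M)) → ℂ := fun t =>
    Complex.exp (2 * Real.pi * Complex.I * (b : ℂ) *
      ((MvPolynomial.eval (fun i => ((t i).val : ℤ)) f : ℤ) : ℂ) / ((p ^ r : ℕ) : ℂ)) with he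
  set e' : (Fin n → ZMod (p ^ r)) → ℂ := fun u =>
    Complex.exp (2 * Real.pi * Complex.I * (b : ℂ) *
      ((MvPolynomial.eval (fun i => ((u i).val : ℤ)) f : ℤ) : ℂ) / ((p ^ r : ℕ) : ℂ)) with he'
  have hconst : ∀ (t : Fin n → ZMod (p ^ M)), e t = e' (π t) := by
    intro t
    have hdvdc : ∀ i, ((p ^ r : ℕ) : ℤ) ∣ (((t i).val : ℤ) - (((π t) i).val : ℤ)) := by
      intro i
      have h1 : ((π t) i) = (((t i).val : ℕ) : ZMod (p ^ r)) := by
        show ZMod.castHom hdvd (ZMod (p ^ r)) (t i) = _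
        conv_lhs => rw [← ZMod.natCast_rightInverse (t i)]
        exact map_natCast _ _
      have h2 : ((π t) i).val = (t i).val % p ^ r := by
        rw [h1, ZMod.val_natCast]
      rw [h2]
      refine ⟨(((t i).val / p ^ r : ℕ) : ℤ), ?_⟩
      conv_lhs => rw [show (((t i).val : ℕ) : ℤ)
        = (((t i).val % p ^ r + p ^ r * ((t i).val / p ^ r) : ℕ) : ℤ) from by
          rw [Nat.mod_add_div]]
      push_cast
      ring
    obtain ⟨k, hk⟩ := dvdEvalSub18 f (p ^ r)
      (fun i => ((t i).val : ℤ)) (fun i => (((π t) i).val : ℤ)) hdvdc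
    have hcast : ((MvPolynomial.eval (fun i => ((t i).val : ℤ)) f : ℤ) : ℂ)
        = ((MvPolynomial.eval (fun i => (((π t) i).val : ℤ)) f : ℤ) : ℂ)
          + ((p ^ r : ℕ) : ℂ) * (k : ℂ) := by
      have : (MvPolynomial.eval (fun i => ((t i).val : ℤ)) f : ℤ)
          = MvPolynomial.eval (fun i => (((π t) i).val : ℤ)) f + (p ^ r : ℕ) * k := by
        omega
      rw [this]
      push_cast
      ring
    rw [he, he']
    simp only
    rw [hcast]
    exact exp_shift18 _ hRC b _ k
  have hcard : ∀ u : Fin n → ZMod (p ^ r),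
      Fintype.card {t : Fin n → ZMod (p ^ M) // π t = u} = (p ^ (M - r)) ^ n := by
    intro u
    have h := fiberCardPi18 n (p ^ r) (p ^ M) hR hN hdvd u
    rw [Nat.pow_div hr hppos] at h
    exact h
  calc ∑ t, e t = ∑ u, ∑ t : {t // π t = u}, e t.1 := (Fintype.sum_fiberwise π e).symm
    _ = ∑ u, ∑ _t : {t // π t = u}, e' u := by
        refine Finset.sum_congr rfl fun u _ => Finset.sum_congr rfl fun t _ => ?_
        rw [hconst t.1, t.2]
    _ = ∑ u, (Fintype.card {t // π t = u} : ℂ) * e' u := by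
        refine Finset.sum_congr rfl fun u _ => ?_
        rw [Finset.sum_const, Finset.card_univ, nsmul_eq_mul]
    _ = ((p ^ (M - r) : ℕ) : ℂ) ^ n * ∑ u, e' u := by
        rw [Finset.mul_sum]
        refine Finset.sum_congr rfl fun u _ => ?_
        rw [hcard u]
        push_cast
        ring

private lemma partition18 (p : ℕ) (hp : 1 < p) (G : ℕ → ℕ → ℂ)
    (hG : ∀ b r, G (b * p) (r + 1) = G b r) :
    ∀ M : ℕ, ∑ a ∈ Finset.range (p ^ M), G a M
      = G 0 0 + ∑ r ∈ Finset.range (M + 1),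
          ∑ b ∈ (Finset.range (p ^ r)).filter (fun b => ¬ p ∣ b), G b r := by
  intro M
  induction M with
  | zero =>
      simp [Finset.sum_filter, Nat.dvd_zero]
  | succ M ih =>
      have hsplit := Finset.sum_filter_add_sum_filter_not
        (Finset.range (p ^ (M + 1))) (fun a => p ∣ a) (fun a => G a (M + 1))
      have himg : (Finset.range (p ^ (M + 1))).filter (fun a => p ∣ a)
          = (Finset.range (p ^ M)).image (· * p) := by
        ext a
        simp only [Finset.mem_filter, Finset.mem_range, Finset.mem_image]
        constructor
        · rintro ⟨ha, b, rfl⟩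
          refine ⟨b, ?_, by ring⟩
          have hpow : p ^ (M + 1) = p ^ M * p := by ring
          rw [hpow] at ha
          exact lt_of_mul_lt_mul_right (by rwa [mul_comm p b] at ha) (Nat.zero_le p)
        · rintro ⟨b, hb, rfl⟩
          refine ⟨?_, ⟨b, by ring⟩⟩
          have : b * p < p ^ M * p := by
            have hp0 : 0 < p := by omega
            exact Nat.mul_lt_mul_of_lt_of_le hb (le_refl p) hp0
          calc b * p < p ^ M * p := this
            _ = p ^ (M + 1) := by ring
      have hmul : ∑ a ∈ (Finset.range (p ^ (M + 1))).filter (fun a => p ∣ a), G a (M + 1)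
          = ∑ b ∈ Finset.range (p ^ M), G b M := by
        rw [himg, Finset.sum_image (by
          intro x _ y _ hxy
          exact Nat.eq_of_mul_eq_mul_right (by omega) hxy)]
        exact Finset.sum_congr rfl fun b _ => hG b M
      rw [← hsplit, hmul, ih]
      conv_rhs => rw [Finset.sum_range_succ]
      ring

private lemma identity18 (n p : ℕ) (hp : p.Prime) (f : MvPolynomial (Fin n) ℤ)
    (S : ℕ → ℕ → ℂ)
    (hSdef : ∀ a r : ℕ,
      haveI : NeZero p := ⟨hp.ne_zero⟩
      S a r = ∑ t : Fin n → ZMod (p ^ r),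
        Complex.exp (2 * Real.pi * Complex.I * a *
          (MvPolynomial.eval (fun i => ((t i).val : ℤ)) f) / (p ^ r : ℕ)))
    (ν : ℤ) (M : ℕ) :
    haveI : NeZero p := ⟨hp.ne_zero⟩
    (p : ℂ) ^ (-((M : ℤ) * ((n : ℤ) - 1))) *
      (Nat.card {t : Fin n → ZMod (p ^ M) //
        MvPolynomial.eval t (f.map (Int.castRingHom (ZMod (p ^ M))))
          = (ν : ZMod (p ^ M))} : ℂ)
      = 1 + ∑ r ∈ Finset.range (M + 1),
          (p : ℂ) ^ (-((r : ℤ) * (n : ℤ))) *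
            ∑ a ∈ (Finset.range (p ^ r)).filter (fun a => ¬ p ∣ a),
              S a r * Complex.exp (-(2 * Real.pi * Complex.I * a * ν) / (p ^ r : ℕ)) := by
  haveI : NeZero p := ⟨hp.ne_zero⟩
  have hppos := hp.pos
  have hP : (p : ℂ) ≠ 0 := by exact_mod_cast hppos.ne'
  have hNpos : 0 < p ^ M := pow_pos hppos M
  have hNC : ((p ^ M : ℕ) : ℂ) ≠ 0 := by exact_mod_cast hNpos.ne'
  set F : (Fin n → ZMod (p ^ M)) → ℤ :=
    fun t => MvPolynomial.eval (fun i => ((t i).val : ℤ)) f with hF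
  -- Step 1 : the count as a sum of indicators
  have hcount : ((Nat.card {t : Fin n → ZMod (p ^ M) //
      MvPolynomial.eval t (f.map (Int.castRingHom (ZMod (p ^ M))))
        = (ν : ZMod (p ^ M))}) : ℂ)
      = ∑ t : Fin n → ZMod (p ^ M),
          if ((p ^ M : ℕ) : ℤ) ∣ (F t - ν) then (1 : ℂ) else 0 := by
    rw [Nat.card_eq_fintype_card, Fintype.card_subtype, Finset.card_filter]
    push_cast
    refine Finset.sum_congr rfl fun t _ => ?_
    have h2 := evalCast18 (Int.castRingHom (ZMod (p ^ M))) f (fun i => ((t i).val : ℤ))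
    simp only [Int.coe_castRingHom] at h2
    have h3 : (fun i => ((((t i).val : ℤ)) : ZMod (p ^ M))) = t := by
      funext i
      push_cast
      exact ZMod.natCast_rightInverse (t i)
    rw [h3] at h2
    have hiff : (MvPolynomial.eval t (f.map (Int.castRingHom (ZMod (p ^ M))))
        = (ν : ZMod (p ^ M))) ↔ ((p ^ M : ℕ) : ℤ) ∣ (F t - ν) := by
      rw [← h2, ← sub_eq_zero, ← Int.cast_sub, ZMod.intCast_zmod_eq_zero_iff_dvd]
    simp only [hiff]
    norm_cast
  -- Step 2 : indicator as a character sum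
  have hifeq : ∀ t : Fin n → ZMod (p ^ M),
      (if ((p ^ M : ℕ) : ℤ) ∣ (F t - ν) then (1 : ℂ) else 0)
      = ((p ^ M : ℕ) : ℂ)⁻¹ * ∑ a ∈ Finset.range (p ^ M),
          Complex.exp (2 * Real.pi * Complex.I * (a : ℂ) * (((F t - ν : ℤ)) : ℂ)
            / ((p ^ M : ℕ) : ℂ)) := by
    intro t
    rw [orth18 (p ^ M) hNpos (F t - ν)]
    by_cases h : ((p ^ M : ℕ) : ℤ) ∣ (F t - ν)
    · rw [if_pos h, if_pos h, inv_mul_cancel₀ hNC]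
    · rw [if_neg h, if_neg h, mul_zero]
  set G : ℕ → ℕ → ℂ := fun b r =>
    ∑ t : Fin n → ZMod (p ^ M),
      Complex.exp (2 * Real.pi * Complex.I * (b : ℂ) * (((F t - ν : ℤ)) : ℂ)
        / ((p ^ r : ℕ) : ℂ)) with hGdef
  have hcount2 : ((Nat.card {t : Fin n → ZMod (p ^ M) //
      MvPolynomial.eval t (f.map (Int.castRingHom (ZMod (p ^ M))))
        = (ν : ZMod (p ^ M))}) : ℂ)
      = ((p ^ M : ℕ) : ℂ)⁻¹ * ∑ a ∈ Finset.range (p ^ M), G a M := by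
    rw [hcount]
    rw [Finset.sum_congr rfl fun t _ => hifeq t, ← Finset.mul_sum]
    congr 1
    exact Finset.sum_comm
  -- Step 3 : partition
  have hG : ∀ b r : ℕ, G (b * p) (r + 1) = G b r := by
    intro b r
    refine Finset.sum_congr rfl fun t _ => ?_
    congr 1
    push_cast
    field_simp
    ring
  have hpart := partition18 p hp.one_lt G hG M
  -- value of G 0 0
  have hG00 : G 0 0 = (p : ℂ) ^ (M * n) := by
    rw [hGdef]
    simp only [Nat.cast_zero, mul_zero, zero_mul, pow_zero, Nat.cast_one, zero_div,
      Complex.exp_zero]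
    rw [Finset.sum_const, Finset.card_univ, nsmul_eq_mul, mul_one]
    have : Fintype.card (Fin n → ZMod (p ^ M)) = (p ^ M) ^ n := by
      rw [Fintype.card_fun, ZMod.card, Fintype.card_fin]
    rw [this]
    push_cast
    ring
  -- value of the slices
  have hslice : ∀ r : ℕ, r ≤ M →
      ∑ b ∈ (Finset.range (p ^ r)).filter (fun b => ¬ p ∣ b), G b r
      = (p : ℂ) ^ ((M - r) * n) *
        ∑ b ∈ (Finset.range (p ^ r)).filter (fun b => ¬ p ∣ b),
          S b r * Complex.exp (-(2 * Real.pi * Complex.I * b * ν) / (p ^ r : ℕ)) := by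
    intro r hr
    rw [Finset.mul_sum]
    refine Finset.sum_congr rfl fun b _ => ?_
    have hsplitexp : ∀ t : Fin n → ZMod (p ^ M),
        Complex.exp (2 * Real.pi * Complex.I * (b : ℂ) * (((F t - ν : ℤ)) : ℂ)
          / ((p ^ r : ℕ) : ℂ))
        = Complex.exp (2 * Real.pi * Complex.I * (b : ℂ) * ((F t : ℤ) : ℂ)
            / ((p ^ r : ℕ) : ℂ)) *
          Complex.exp (-(2 * Real.pi * Complex.I * (b : ℂ) * (ν : ℂ)) / ((p ^ r : ℕ) : ℂ)) := by
      intro t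
      rw [← Complex.exp_add]
      congr 1
      push_cast
      ring
    rw [hGdef]
    simp only
    rw [Finset.sum_congr rfl fun t _ => hsplitexp t, ← Finset.sum_mul]
    rw [lift18 n p hp f b r M hr]
    rw [hSdef b r]
    push_cast
    ring
  -- Step 4 : assemble
  rw [hcount2, hpart, hG00]
  rw [Finset.sum_congr rfl (fun r hr => hslice r (by
    simp only [Finset.mem_range] at hr; omega))]
  have hinv : ((p ^ M : ℕ) : ℂ)⁻¹ = (p : ℂ) ^ (-(M : ℤ)) := by
    push_cast
    rw [← zpow_natCast (p : ℂ) M, ← zpow_neg]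
  rw [hinv, mul_add, Finset.mul_sum, mul_add, Finset.mul_sum]
  have hone : (p : ℂ) ^ (-((M : ℤ) * ((n : ℤ) - 1))) * ((p : ℂ) ^ (-(M : ℤ)) * (p : ℂ) ^ (M * n)) = 1 := by
    rw [← zpow_natCast (p : ℂ) (M * n), ← zpow_add₀ hP, ← zpow_add₀ hP]
    rw [show -((M : ℤ) * ((n : ℤ) - 1)) + (-(M : ℤ) + (M * n : ℕ)) = 0 by push_cast; ring]
    exact zpow_zero _
  rw [hone]
  congr 1
  refine Finset.sum_congr rfl fun r hr => ?_
  simp only [Finset.mem_range] at hr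
  have hr' : r ≤ M := by omega
  rw [← mul_assoc, ← mul_assoc]
  congr 1
  rw [← zpow_natCast (p : ℂ) ((M - r) * n), ← zpow_add₀ hP, ← zpow_add₀ hP]
  congr 1
  have : ((M - r : ℕ) : ℤ) = (M : ℤ) - r := by omega
  push_cast [this]
  ring
/-- Birch tail bound: with `c = n·2^{-d}/(d-1) − 1 > 0`, the assumed bound
`|S_{a,p^r}| ≪ p^{r(n-c-2)}` for `p ∤ a` gives
`|∑_{r ≥ m} p^{-rn} ∑_{a mod p^r, p∤a} S_{a,p^r} e(-aν/p^r)| ≪ p^{-m(1+c)}`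
uniformly in `ν`; in particular the `p`-adic density of solutions of
`f(t) ≡ ν` equals `1 + O(p^{-1-c})` uniformly in `ν`. -/
theorem stmt_18 (n d p : ℕ) (hp : p.Prime) (hd : 2 ≤ d)
    (hn : 2 ^ d * (d - 1) < n)
    (f : MvPolynomial (Fin n) ℤ) (hhom : f.IsHomogeneous d)
    (hsmooth : ∀ x : Fin n → ℂ,
      (∀ i, MvPolynomial.eval x
        (MvPolynomial.pderiv i (f.map (Int.castRingHom ℂ))) = 0) → x = 0)
    (c : ℝ) (hc : c = (n : ℝ) * ((2 : ℝ) ^ d)⁻¹ / ((d : ℝ) - 1) - 1)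
    (S : ℕ → ℕ → ℂ)
    (hSdef : ∀ a r : ℕ,
      haveI : NeZero p := ⟨hp.ne_zero⟩
      S a r = ∑ t : Fin n → ZMod (p ^ r),
        Complex.exp (2 * Real.pi * Complex.I * a *
          (MvPolynomial.eval (fun i => ((t i).val : ℤ)) f) / (p ^ r : ℕ)))
    (A : ℝ)
    (hS : ∀ r a : ℕ, ¬ p ∣ a →
      ‖S a r‖ ≤ A * (p : ℝ) ^ ((r : ℝ) * ((n : ℝ) - c - 2))) :
    ∃ C : ℝ, 0 < C ∧
      (∀ (ν : ℤ) (m : ℕ), 1 ≤ m →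
        ‖∑' r : ℕ, if r < m then 0 else
            (p : ℂ) ^ (-((r : ℤ) * (n : ℤ))) *
              ∑ a ∈ (Finset.range (p ^ r)).filter (fun a => ¬ p ∣ a),
                S a r * Complex.exp (-(2 * Real.pi * Complex.I * a * ν) / (p ^ r : ℕ))‖
          ≤ C * (p : ℝ) ^ (-(m : ℝ) * (1 + c))) ∧
      (∀ ν : ℤ, ∃ L : ℝ,
        Tendsto (fun M : ℕ =>
            haveI : NeZero p := ⟨hp.ne_zero⟩
            (p : ℝ) ^ (-((M : ℤ) * ((n : ℤ) - 1))) *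
              (Nat.card {t : Fin n → ZMod (p ^ M) //
                MvPolynomial.eval t (f.map (Int.castRingHom (ZMod (p ^ M))))
                  = (ν : ZMod (p ^ M))} : ℝ))
          atTop (nhds L) ∧ |L - 1| ≤ C * (p : ℝ) ^ (-(1 : ℝ) - c)) := by
  haveI : NeZero p := ⟨hp.ne_zero⟩
  have hppos := hp.pos
  have hp1 : (1 : ℝ) < p := by exact_mod_cast hp.one_lt
  have hpR : (0 : ℝ) < p := by positivity
  -- c is positive
  have hd2 : (2 : ℝ) ≤ (d : ℝ) := by exact_mod_cast hd
  have h2d : (0 : ℝ) < 2 ^ d := by positivity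
  have hdd : (0 : ℝ) < (d : ℝ) - 1 := by linarith
  have hden : (0 : ℝ) < 2 ^ d * ((d : ℝ) - 1) := mul_pos h2d hdd
  have hnR : (2 : ℝ) ^ d * ((d : ℝ) - 1) < (n : ℝ) := by
    have h1 : ((2 ^ d * (d - 1) : ℕ) : ℝ) < (n : ℝ) := by exact_mod_cast hn
    rwa [Nat.cast_mul, Nat.cast_pow, Nat.cast_sub (by omega : 1 ≤ d), Nat.cast_two,
      Nat.cast_one] at h1
  have hcc : c = (n : ℝ) / (2 ^ d * ((d : ℝ) - 1)) - 1 := by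
    rw [hc]
    congr 1
    field_simp
  have hcpos : 0 < c := by
    rw [hcc, sub_pos]
    exact (one_lt_div hden).2 hnR
  -- the geometric ratio
  set q : ℝ := (p : ℝ) ^ (-(1 + c)) with hqdef
  have hq0 : 0 < q := Real.rpow_pos_of_pos hpR _
  have hq1 : q < 1 := Real.rpow_lt_one_of_one_lt_of_neg hp1 (by linarith)
  -- A is at least one
  have hS10 : S 1 0 = 1 := by
    rw [hSdef 1 0]
    have hone : ∀ t : Fin n → ZMod (p ^ 0),
        Complex.exp (2 * Real.pi * Complex.I * ((1 : ℕ) : ℂ) *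
          ((MvPolynomial.eval (fun i => ((t i).val : ℤ)) f : ℤ) : ℂ) / ((p ^ 0 : ℕ) : ℂ)) = 1 := by
      intro t
      have harg : 2 * Real.pi * Complex.I * ((1 : ℕ) : ℂ) *
          ((MvPolynomial.eval (fun i => ((t i).val : ℤ)) f : ℤ) : ℂ) / ((p ^ 0 : ℕ) : ℂ)
          = ((MvPolynomial.eval (fun i => ((t i).val : ℤ)) f : ℤ) : ℂ) *
            (2 * Real.pi * Complex.I) := by
        push_cast
        ring
      rw [harg, Complex.exp_int_mul_two_pi_mul_I]
    rw [Finset.sum_congr rfl fun t _ => hone t]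
    rw [Finset.sum_const, Finset.card_univ, nsmul_eq_mul, mul_one]
    have : Fintype.card (Fin n → ZMod (p ^ 0)) = (p ^ 0) ^ n := by
      rw [Fintype.card_fun, ZMod.card, Fintype.card_fin]
    rw [this]
    norm_num
  have hA : 1 ≤ A := by
    have h1 := hS 0 1 (by simpa using hp.one_lt.ne')
    rw [hS10] at h1
    simpa using h1
  have hA0 : 0 < A := by linarith
  -- bound on the individual terms
  have htermbound : ∀ (ν : ℤ) (r : ℕ),
      ‖(p : ℂ) ^ (-((r : ℤ) * (n : ℤ))) *
        ∑ a ∈ (Finset.range (p ^ r)).filter (fun a => ¬ p ∣ a),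
          S a r * Complex.exp (-(2 * Real.pi * Complex.I * a * ν) / (p ^ r : ℕ))‖
      ≤ A * q ^ r := by
    intro ν r
    have hnormexp : ∀ a : ℕ,
        ‖Complex.exp (-(2 * Real.pi * Complex.I * (a : ℂ) * (ν : ℂ)) / ((p ^ r : ℕ) : ℂ))‖
          = 1 := by
      intro a
      have harg : -(2 * Real.pi * Complex.I * (a : ℂ) * (ν : ℂ)) / ((p ^ r : ℕ) : ℂ)
          = ((-(2 * Real.pi * a * ν / (p ^ r : ℕ)) : ℝ) : ℂ) * Complex.I := by
        push_cast
        ring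
      rw [harg, Complex.norm_exp_ofReal_mul_I]
    have hBpos : (0 : ℝ) < A * (p : ℝ) ^ ((r : ℝ) * ((n : ℝ) - c - 2)) :=
      mul_pos hA0 (Real.rpow_pos_of_pos hpR _)
    have hsum : ‖∑ a ∈ (Finset.range (p ^ r)).filter (fun a => ¬ p ∣ a),
        S a r * Complex.exp (-(2 * Real.pi * Complex.I * a * ν) / (p ^ r : ℕ))‖
        ≤ (p ^ r : ℝ) * (A * (p : ℝ) ^ ((r : ℝ) * ((n : ℝ) - c - 2))) := by
      calc ‖∑ a ∈ (Finset.range (p ^ r)).filter (fun a => ¬ p ∣ a),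
          S a r * Complex.exp (-(2 * Real.pi * Complex.I * a * ν) / (p ^ r : ℕ))‖
          ≤ ∑ a ∈ (Finset.range (p ^ r)).filter (fun a => ¬ p ∣ a),
            ‖S a r * Complex.exp (-(2 * Real.pi * Complex.I * a * ν) / (p ^ r : ℕ))‖ :=
          norm_sum_le _ _
        _ ≤ ∑ _a ∈ (Finset.range (p ^ r)).filter (fun a => ¬ p ∣ a),
            (A * (p : ℝ) ^ ((r : ℝ) * ((n : ℝ) - c - 2))) := by
          refine Finset.sum_le_sum fun a ha => ?_
          rw [norm_mul, hnormexp a, mul_one]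
          exact hS r a (Finset.mem_filter.1 ha).2
        _ = ((Finset.range (p ^ r)).filter (fun a => ¬ p ∣ a)).card *
            (A * (p : ℝ) ^ ((r : ℝ) * ((n : ℝ) - c - 2))) := by
          rw [Finset.sum_const, nsmul_eq_mul]
        _ ≤ (p ^ r : ℝ) * (A * (p : ℝ) ^ ((r : ℝ) * ((n : ℝ) - c - 2))) := by
          refine mul_le_mul_of_nonneg_right ?_ hBpos.le
          have hcard : ((Finset.range (p ^ r)).filter (fun a => ¬ p ∣ a)).card ≤ p ^ r := by
            calc ((Finset.range (p ^ r)).filter (fun a => ¬ p ∣ a)).card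
                ≤ (Finset.range (p ^ r)).card := Finset.card_filter_le _ _
              _ = p ^ r := Finset.card_range _
          exact_mod_cast hcard
    have hnormp : ‖(p : ℂ) ^ (-((r : ℤ) * (n : ℤ)))‖
        = (p : ℝ) ^ ((-((r : ℤ) * (n : ℤ)) : ℤ) : ℝ) := by
      rw [norm_zpow, Complex.norm_natCast, Real.rpow_intCast]
    rw [norm_mul, hnormp]
    calc (p : ℝ) ^ ((-((r : ℤ) * (n : ℤ)) : ℤ) : ℝ) *
        ‖∑ a ∈ (Finset.range (p ^ r)).filter (fun a => ¬ p ∣ a),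
          S a r * Complex.exp (-(2 * Real.pi * Complex.I * a * ν) / (p ^ r : ℕ))‖
        ≤ (p : ℝ) ^ ((-((r : ℤ) * (n : ℤ)) : ℤ) : ℝ) *
          ((p ^ r : ℝ) * (A * (p : ℝ) ^ ((r : ℝ) * ((n : ℝ) - c - 2)))) := by
          exact mul_le_mul_of_nonneg_left hsum (Real.rpow_nonneg hpR.le _)
      _ = A * q ^ r := by
          have hpr : (p ^ r : ℝ) = (p : ℝ) ^ ((r : ℕ) : ℝ) := by
            rw [Real.rpow_natCast]
          rw [hpr]
          have hcomb : (p : ℝ) ^ ((-((r : ℤ) * (n : ℤ)) : ℤ) : ℝ) *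
              ((p : ℝ) ^ ((r : ℕ) : ℝ) * (A * (p : ℝ) ^ ((r : ℝ) * ((n : ℝ) - c - 2))))
              = A * (p : ℝ) ^ (((-((r : ℤ) * (n : ℤ)) : ℤ) : ℝ) + ((r : ℕ) : ℝ)
                  + (r : ℝ) * ((n : ℝ) - c - 2)) := by
            rw [Real.rpow_add hpR, Real.rpow_add hpR]
            ring
          rw [hcomb]
          congr 1
          rw [show ((-((r : ℤ) * (n : ℤ)) : ℤ) : ℝ) + ((r : ℕ) : ℝ)
              + (r : ℝ) * ((n : ℝ) - c - 2) = (-(1 + c)) * (r : ℝ) by push_cast; ring]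
          rw [hqdef, ← Real.rpow_natCast ((p : ℝ) ^ (-(1 + c))) r, ← Real.rpow_mul hpR.le]
  -- summability of the terms
  have hsummable : ∀ ν : ℤ, Summable (fun r : ℕ =>
      (p : ℂ) ^ (-((r : ℤ) * (n : ℤ))) *
        ∑ a ∈ (Finset.range (p ^ r)).filter (fun a => ¬ p ∣ a),
          S a r * Complex.exp (-(2 * Real.pi * Complex.I * a * ν) / (p ^ r : ℕ))) := by
    intro ν
    exact Summable.of_norm_bounded
      ((summable_geometric_of_lt_one hq0.le hq1).mul_left A) (htermbound ν)
  set C : ℝ := A * (1 - q)⁻¹ with hCdef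
  have hCpos : 0 < C := mul_pos hA0 (inv_pos.2 (by linarith))
  -- uniform tail bound
  have htail : ∀ (ν : ℤ) (m : ℕ),
      ‖∑' r : ℕ, if r < m then 0 else
          (p : ℂ) ^ (-((r : ℤ) * (n : ℤ))) *
            ∑ a ∈ (Finset.range (p ^ r)).filter (fun a => ¬ p ∣ a),
              S a r * Complex.exp (-(2 * Real.pi * Complex.I * a * ν) / (p ^ r : ℕ))‖
        ≤ C * q ^ m := by
    intro ν m
    set T : ℕ → ℂ := fun r =>
      (p : ℂ) ^ (-((r : ℤ) * (n : ℤ))) *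
        ∑ a ∈ (Finset.range (p ^ r)).filter (fun a => ¬ p ∣ a),
          S a r * Complex.exp (-(2 * Real.pi * Complex.I * a * ν) / (p ^ r : ℕ)) with hT
    have hgs : Summable (fun r => if r < m then 0 else T r) := by
      refine Summable.of_norm_bounded
        ((summable_geometric_of_lt_one hq0.le hq1).mul_left A) ?_
      intro r
      by_cases h : r < m
      · simp only [h, if_true, norm_zero]
        positivity
      · simp only [h, if_false]
        exact htermbound ν r
    have hzero : ∑ i ∈ Finset.range m, (if i < m then (0 : ℂ) else T i) = 0 := by
      refine Finset.sum_eq_zero fun i hi => ?_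
      rw [if_pos (Finset.mem_range.1 hi)]
    rw [← Summable.sum_add_tsum_nat_add m hgs, hzero, zero_add]
    have hhs : HasSum (fun i : ℕ => (A * q ^ m) * q ^ i) (A * q ^ m * (1 - q)⁻¹) :=
      (hasSum_geometric_of_lt_one hq0.le hq1).mul_left _
    have hb : ∀ i : ℕ, ‖(if i + m < m then (0 : ℂ) else T (i + m))‖ ≤ (A * q ^ m) * q ^ i := by
      intro i
      rw [if_neg (by omega)]
      calc ‖T (i + m)‖ ≤ A * q ^ (i + m) := htermbound ν (i + m)
        _ = (A * q ^ m) * q ^ i := by rw [pow_add]; ring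
    calc ‖∑' i : ℕ, (if i + m < m then (0 : ℂ) else T (i + m))‖
        ≤ A * q ^ m * (1 - q)⁻¹ := tsum_of_norm_bounded hhs hb
      _ = C * q ^ m := by rw [hCdef]; ring
  have hqm : ∀ m : ℕ, C * q ^ m = C * (p : ℝ) ^ (-(m : ℝ) * (1 + c)) := by
    intro m
    congr 1
    rw [hqdef, ← Real.rpow_natCast ((p : ℝ) ^ (-(1 + c))) m, ← Real.rpow_mul hpR.le]
    congr 1
    ring
  refine ⟨C, hCpos, ?_, ?_⟩
  · intro ν m _
    have h1 := htail ν m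
    rwa [hqm m] at h1
  · intro ν
    set T : ℕ → ℂ := fun r =>
      (p : ℂ) ^ (-((r : ℤ) * (n : ℤ))) *
        ∑ a ∈ (Finset.range (p ^ r)).filter (fun a => ¬ p ∣ a),
          S a r * Complex.exp (-(2 * Real.pi * Complex.I * a * ν) / (p ^ r : ℕ)) with hT
    have hsum : Summable T := hsummable ν
    refine ⟨((1 : ℂ) + ∑' r, T r).re, ?_, ?_⟩
    · -- convergence of the densities
      have h1 : Tendsto (fun k : ℕ => ∑ r ∈ Finset.range k, T r) atTop
          (nhds (∑' r, T r)) := hsum.hasSum.tendsto_sum_nat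
      have h2 : Tendsto (fun M : ℕ => ∑ r ∈ Finset.range (M + 1), T r) atTop
          (nhds (∑' r, T r)) := h1.comp (tendsto_add_atTop_nat 1)
      have h3 : Tendsto (fun M : ℕ => ((1 : ℂ) + ∑ r ∈ Finset.range (M + 1), T r).re) atTop
          (nhds (((1 : ℂ) + ∑' r, T r).re)) :=
        (Complex.continuous_re.tendsto _).comp (tendsto_const_nhds.add h2)
      refine Tendsto.congr (fun M => ?_) h3
      have hId := identity18 n p hp f S hSdef ν M
      have hcast : (((p : ℝ) ^ (-((M : ℤ) * ((n : ℤ) - 1))) *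
          (Nat.card {t : Fin n → ZMod (p ^ M) //
            MvPolynomial.eval t (f.map (Int.castRingHom (ZMod (p ^ M))))
              = (ν : ZMod (p ^ M))} : ℝ) : ℝ) : ℂ)
          = (p : ℂ) ^ (-((M : ℤ) * ((n : ℤ) - 1))) *
            (Nat.card {t : Fin n → ZMod (p ^ M) //
              MvPolynomial.eval t (f.map (Int.castRingHom (ZMod (p ^ M))))
                = (ν : ZMod (p ^ M))} : ℂ) := by
        push_cast
        ring
      calc ((1 : ℂ) + ∑ r ∈ Finset.range (M + 1), T r).re
          = ((p : ℂ) ^ (-((M : ℤ) * ((n : ℤ) - 1))) *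
              (Nat.card {t : Fin n → ZMod (p ^ M) //
                MvPolynomial.eval t (f.map (Int.castRingHom (ZMod (p ^ M))))
                  = (ν : ZMod (p ^ M))} : ℂ)).re := by rw [hId]
        _ = (((p : ℝ) ^ (-((M : ℤ) * ((n : ℤ) - 1))) *
              (Nat.card {t : Fin n → ZMod (p ^ M) //
                MvPolynomial.eval t (f.map (Int.castRingHom (ZMod (p ^ M))))
                  = (ν : ZMod (p ^ M))} : ℝ) : ℝ) : ℂ).re := by rw [hcast]
        _ = (p : ℝ) ^ (-((M : ℤ) * ((n : ℤ) - 1))) *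
              (Nat.card {t : Fin n → ZMod (p ^ M) //
                MvPolynomial.eval t (f.map (Int.castRingHom (ZMod (p ^ M))))
                  = (ν : ZMod (p ^ M))} : ℝ) := Complex.ofReal_re _
    · -- the bound on the limit
      have h0 : T 0 = 0 := by
        have hempty : (Finset.range (p ^ 0)).filter (fun a => ¬ p ∣ a) = ∅ := by
          rw [pow_zero, Finset.range_one]
          ext a
          simp only [Finset.mem_filter, Finset.mem_singleton, Finset.notMem_empty,
            iff_false, not_and]
          rintro rfl
          simp [Nat.dvd_zero]
        rw [hT]
        simp only
        rw [hempty, Finset.sum_empty, mul_zero]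
      have heq : ∑' r, T r = ∑' r : ℕ, (if r < 1 then 0 else T r) := by
        refine tsum_congr fun r => ?_
        match r with
        | 0 => rw [if_pos (by omega), h0]
        | (k + 1) => rw [if_neg (by omega)]
      calc |((1 : ℂ) + ∑' r, T r).re - 1|
          = |(∑' r, T r).re| := by rw [Complex.add_re, Complex.one_re]; congr 1; ring
        _ ≤ ‖∑' r, T r‖ := Complex.abs_re_le_norm _
        _ = ‖∑' r, T r‖ := rfl
        _ = ‖∑' r : ℕ, (if r < 1 then 0 else T r)‖ := by rw [heq]
        _ ≤ C * q ^ 1 := htail ν 1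
        _ = C * (p : ℝ) ^ (-(1 : ℝ) - c) := by
            rw [pow_one, hqdef]
            congr 1
            congr 1
            ring
end
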